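/- arXiv:nlin/0306040 — 8 statements merged into one kernel-verified Lean document; each statement's English description precedes it below -/
import Mathlib

section
/- Let Q = {0,…,q−1}, let f : Q^n → Q be a local rule with f(0,…,0) = 0, and let F : Q^ℤ → Q^ℤ be the cellular automaton F(c)_i = f(c_i,…,c_{i+n−1}). Let b ≥ 1 and φ : Q^b → ℝ with φ(0,…,0) = 0. Then the following are equivalent: (a) for every p ≥ 1 and every p-periodic configuration c ∈ Q^ℤ (i.e. c_{i+p} = c_i for all i), ∑_{k=0}^{p−1} φ(F(c)_k,…,F(c)_{k+b−1}) = ∑_{k=0}^{p−1} φ(c_k,…,c_{k+b−1}); (b) for every finite configuration c ∈ Q^ℤ (i.e. c_i = 0 for all but finitely many i), ∑_{k∈ℤ} φ(F(c)_k,…,F(c)_{k+b−1}) = ∑_{k∈ℤ} φ(c_k,…,c_{k+b−1}), both sums having only finitely many nonzero terms. -/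
/-!
Both sides are statements about sums of a sliding-window observable `g ∘ window r`, where for
`φ ∘ F` the window has width `b + n`. A finite configuration supported in an
interval shorter than `p - r` has the same window sum as its `p`-periodic extension has over one
period, which gives periodic ⇒ finite. Conversely, for `p`-periodic `c` and `N ≥ p + r`, the
truncations of `c` to `[0, N + p)` and `[0, N)` have window sums differing by exactly the sum
over one period, so finite conservation applied to both truncations gives periodic conservation.
-/

open Finset Function

namespace Finset

variable {α M : Type*} [AddCommMonoid M]

theorem sum_Ico_consecutive' [LinearOrder α] [LocallyFiniteOrder α] (f : α → M) {a b c : α}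
    (hab : a ≤ b) (hbc : b ≤ c) :
    ∑ i ∈ Ico a b, f i + ∑ i ∈ Ico b c, f i = ∑ i ∈ Ico a c, f i :=
  Ico_union_Ico_eq_Ico hab hbc ▸ (sum_union (Ico_disjoint_Ico_consecutive a b c)).symm

end Finset

namespace Int

variable {M : Type*} [AddCommMonoid M]

theorem sum_Ico_zero_natCast (f : ℤ → M) (p : ℕ) :
    ∑ k ∈ Ico (0 : ℤ) p, f k = ∑ k ∈ Finset.range p, f k := by
  simp [Int.Ico_eq_finset_map]

theorem sum_Ico_eq_add_sum_Ico_of_shift {G g : ℤ → M} {A m B p : ℤ} (hAm : A ≤ m) (hmB : m ≤ B)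
    (hp : 0 ≤ p) (hlt : ∀ k < m, G k = g k) (hge : ∀ k, m ≤ k → G (k + p) = g k) :
    ∑ k ∈ Ico A (B + p), G k = ∑ k ∈ Ico A B, g k + ∑ k ∈ Ico m (m + p), G k := by
  calc ∑ k ∈ Ico A (B + p), G k
      = ∑ k ∈ Ico A m, G k + (∑ k ∈ Ico m (m + p), G k + ∑ k ∈ Ico (m + p) (B + p), G k) := by
        rw [sum_Ico_consecutive' G (by omega : m ≤ m + p) (by omega),
          sum_Ico_consecutive' G hAm (by omega)]
    _ = ∑ k ∈ Ico A m, g k + (∑ k ∈ Ico m (m + p), G k + ∑ k ∈ Ico m B, g k) := by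
        rw [sum_congr rfl fun k hk => hlt k (mem_Ico.1 hk).2, ← sum_Ico_add',
          sum_congr rfl fun k hk => hge k (mem_Ico.1 hk).1]
    _ = ∑ k ∈ Ico A B, g k + ∑ k ∈ Ico m (m + p), G k := by
        rw [← sum_Ico_consecutive' g hAm hmB]; abel

end Int

theorem Function.Periodic.sum_Ico_eq_sum_range {M : Type*} [AddCommMonoid M] {h : ℤ → M} {p : ℕ}
    (hh : Periodic h p) (hp : 0 < p) (a : ℤ) :
    ∑ k ∈ Ico a (a + p), h k = ∑ k ∈ range p, h k := by
  have hp' : (0 : ℤ) < p := by exact_mod_cast hp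
  rw [← Int.sum_Ico_zero_natCast]
  refine sum_nbij' (toIcoMod hp' 0) (toIcoMod hp' a) ?_ ?_ ?_ ?_ ?_
  · intro k _
    simpa using toIcoMod_mem_Ico hp' 0 k
  · intro k _
    simpa using toIcoMod_mem_Ico hp' a k
  · intro k hk
    rw [toIcoMod_toIcoMod, (toIcoMod_eq_self hp').2 (by simpa using hk)]
  · intro k hk
    rw [toIcoMod_toIcoMod, (toIcoMod_eq_self hp').2 (by simpa using hk)]
  · intro k _
    rw [← hh.sub_zsmul_eq (toIcoDiv hp' 0 k), ← self_sub_toIcoMod hp' 0 k, sub_sub_cancel]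

section Window

variable {α M : Type*} {r : ℕ}

def window (r : ℕ) (c : ℤ → α) (k : ℤ) : Fin r → α := fun j => c (k + (j : ℕ))

theorem window_congr {x y : ℤ → α} {k : ℤ} (h : ∀ i, k ≤ i → i < k + r → x i = y i) :
    window r x k = window r y k :=
  funext fun j => h _ (by omega) (by omega)

theorem Function.Periodic.window {c : ℤ → α} {p : ℤ} (hc : Periodic c p) :
    Periodic (window r c) p := fun k =>
  funext fun j => by
    show c (k + p + (j : ℕ)) = c (k + (j : ℕ))
    rw [add_right_comm]
    exact hc _

variable [Zero α]

theorem window_eq_zero {c : ℤ → α} {k : ℤ} (h : ∀ i, k ≤ i → i < k + r → c i = 0) :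
    window r c k = 0 :=
  funext fun j => h _ (by omega) (by omega)

variable [AddCommMonoid M]

theorem finsum_window_eq_sum_Ico {g : (Fin r → α) → M} (hg : g 0 = 0) {c : ℤ → α} {A B : ℤ}
    (hc : ∀ i, i < A + r ∨ B ≤ i → c i = 0) :
    ∑ᶠ k, g (window r c k) = ∑ k ∈ Ico A B, g (window r c k) := by
  refine finsum_eq_sum_of_support_subset _ fun k hk => ?_
  by_contra hkAB
  refine hk ?_
  show g (window r c k) = 0
  rw [window_eq_zero fun i hki hik => hc i ?_, hg]
  simp only [coe_Ico, Set.mem_Ico, not_and_or, not_le, not_lt] at hkAB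
  omega

theorem finsum_window_eq_sum_range_comp_toIcoMod {g : (Fin r → α) → M} (hg : g 0 = 0)
    {c : ℤ → α} {a : ℤ} {p : ℕ} (hp : (0 : ℤ) < p) (hrp : r ≤ p)
    (hc : ∀ i, i < a + r ∨ a + p ≤ i → c i = 0) :
    ∑ᶠ k, g (window r c k) = ∑ k ∈ range p, g (window r (c ∘ toIcoMod hp a) k) := by
  have hwindow : ∀ k ∈ Ico a (a + p), window r c k = window r (c ∘ toIcoMod hp a) k := by
    intro k hk
    refine window_congr fun i hki hik => ?_
    rw [mem_Ico] at hk
    by_cases hi : i < a + p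
    · rw [comp_apply, (toIcoMod_eq_self hp).2 ⟨by omega, hi⟩]
    · have hmod : toIcoMod hp a i = i - p :=
        calc toIcoMod hp a i = toIcoMod hp a (i - p + p) := by rw [sub_add_cancel]
          _ = i - p := by rw [toIcoMod_add_right, (toIcoMod_eq_self hp).2 ⟨by omega, by omega⟩]
      rw [comp_apply, hmod, hc i (by omega), hc (i - p) (by omega)]
  rw [finsum_window_eq_sum_Ico hg hc, sum_congr rfl fun k hk => congrArg g (hwindow k hk)]
  exact (toIcoMod_periodic hp a).comp c |>.window.comp g |>.sum_Ico_eq_sum_range (by omega) a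

theorem finsum_window_indicator_Ico_add_period {g : (Fin r → α) → M} (hg : g 0 = 0) {c : ℤ → α}
    {p : ℕ} (hc : Periodic c p) {N : ℤ} (hN : p + r ≤ N) :
    ∑ᶠ k, g (window r ((Set.Ico 0 (N + p)).indicator c) k) =
      ∑ᶠ k, g (window r ((Set.Ico 0 N).indicator c) k) + ∑ k ∈ range p, g (window r c k) := by
  have hzero : ∀ L i, i < 0 ∨ L ≤ i → (Set.Ico 0 L).indicator c i = 0 := fun L i hi =>
    Set.indicator_of_notMem (by simp only [Set.mem_Ico]; omega) c
  have hlt : ∀ k < 0, g (window r ((Set.Ico 0 (N + p)).indicator c) k) =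
      g (window r ((Set.Ico 0 N).indicator c) k) := fun k hk => by
    refine congrArg g (window_congr fun i _ hi => ?_)
    simp only [Set.indicator_apply, Set.mem_Ico]
    split_ifs <;> first | rfl | omega
  have hge : ∀ k, 0 ≤ k → g (window r ((Set.Ico 0 (N + p)).indicator c) (k + p)) =
      g (window r ((Set.Ico 0 N).indicator c) k) := fun k hk => by
    refine congrArg g (funext fun j => ?_)
    show (Set.Ico 0 (N + p)).indicator c (k + p + (j : ℕ)) =
      (Set.Ico 0 N).indicator c (k + (j : ℕ))
    rw [add_right_comm, Set.indicator_apply, Set.indicator_apply, hc]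
    simp only [Set.mem_Ico]
    split_ifs <;> first | rfl | omega
  have hIco : ∀ k ∈ Ico (0 : ℤ) p, g (window r ((Set.Ico 0 (N + p)).indicator c) k) =
      g (window r c k) := fun k hk => by
    rw [mem_Ico] at hk
    refine congrArg g (window_congr fun i _ _ => Set.indicator_of_mem ?_ c)
    simp only [Set.mem_Ico]
    omega
  rw [finsum_window_eq_sum_Ico (A := -r) (B := N + p) hg fun i hi => hzero _ i (by omega),
    finsum_window_eq_sum_Ico (A := -r) (B := N) hg fun i hi => hzero _ i (by omega),
    Int.sum_Ico_eq_add_sum_Ico_of_shift (by omega) (by omega) (by omega) hlt hge, zero_add,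
    sum_congr rfl hIco, Int.sum_Ico_zero_natCast]

theorem forall_periodic_sum_window_eq_iff_forall_finite_finsum_window_eq [IsLeftCancelAdd M]
    {g₁ g₂ : (Fin r → α) → M} (h₁ : g₁ 0 = 0) (h₂ : g₂ 0 = 0) :
    (∀ p : ℕ, 1 ≤ p → ∀ c : ℤ → α, Periodic c p →
        ∑ k ∈ range p, g₁ (window r c k) = ∑ k ∈ range p, g₂ (window r c k)) ↔
      ∀ c : ℤ → α, {i | c i ≠ 0}.Finite →
        ∑ᶠ k, g₁ (window r c k) = ∑ᶠ k, g₂ (window r c k) := by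
  constructor
  · intro hper c hc
    obtain ⟨N, hN⟩ := (hc.image Int.natAbs).bddAbove
    have hp : (0 : ℤ) < (2 * N + 1 + r : ℕ) := by positivity
    have hc' : ∀ i, i < -(N + r : ℤ) + r ∨ -(N + r : ℤ) + (2 * N + 1 + r : ℕ) ≤ i → c i = 0 :=
      fun i hi => by
        by_contra h
        have := hN ⟨i, h, rfl⟩
        omega
    rw [finsum_window_eq_sum_range_comp_toIcoMod h₁ hp (by omega) hc',
      finsum_window_eq_sum_range_comp_toIcoMod h₂ hp (by omega) hc']
    exact hper _ (by omega) _ ((toIcoMod_periodic hp _).comp c)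
  · intro hfin p _ c hc
    have hfin' : ∀ L : ℤ, {i | (Set.Ico 0 L).indicator c i ≠ 0}.Finite := fun L =>
      (Set.finite_Ico 0 L).subset fun i hi => by
        by_contra h
        exact hi (Set.indicator_of_notMem h c)
    have key := hfin _ (hfin' (p + r + p))
    rw [finsum_window_indicator_Ico_add_period h₁ hc le_rfl,
      finsum_window_indicator_Ico_add_period h₂ hc le_rfl, hfin _ (hfin' _)] at key
    exact add_left_cancel key

end Window

section BlockMap

variable {α M : Type*} {n b : ℕ}

def blockMap (f : (Fin n → α) → α) (c : ℤ → α) : ℤ → α := fun i => f (window n c i)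

def pullbackRule (f : (Fin n → α) → α) (φ : (Fin b → α) → M) : (Fin (b + n) → α) → M :=
  fun w => φ fun j => f fun t => w ⟨j + t, by omega⟩

theorem pullbackRule_window (f : (Fin n → α) → α) (φ : (Fin b → α) → M) (c : ℤ → α) (k : ℤ) :
    pullbackRule f φ (window (b + n) c k) = φ (window b (blockMap f c) k) := by
  show (φ fun j => f fun t => c (k + ((j + t : ℕ) : ℤ))) = φ fun j => f fun t => c (k + j + t)
  simp only [Nat.cast_add, add_assoc]

theorem window_comp_castAdd (c : ℤ → α) (k : ℤ) :
    window (b + n) c k ∘ Fin.castAdd n = window b c k :=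
  rfl

theorem pullbackRule_zero [Zero α] [Zero M] {f : (Fin n → α) → α} {φ : (Fin b → α) → M}
    (hf : f 0 = 0) (hφ : φ 0 = 0) : pullbackRule f φ 0 = 0 :=
  show φ (fun _ => f 0) = 0 by rw [hf]; exact hφ

end BlockMap

theorem periodic_conservation_iff_finite_conservation_general
    (q n b : ℕ) [NeZero q]
    (f : (Fin n → Fin q) → Fin q) (hf0 : f (fun _ => 0) = 0)
    (φ : (Fin b → Fin q) → ℝ) (hφ0 : φ (fun _ => 0) = 0)
    (F : (ℤ → Fin q) → ℤ → Fin q)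
    (hF : ∀ (c : ℤ → Fin q) (i : ℤ), F c i = f (fun t => c (i + ((t : ℕ) : ℤ)))) :
    (∀ p : ℕ, 1 ≤ p → ∀ c : ℤ → Fin q, (∀ i : ℤ, c (i + (p : ℤ)) = c i) →
        ∑ k ∈ Finset.range p, φ (fun j => F c ((k : ℤ) + ((j : ℕ) : ℤ))) =
        ∑ k ∈ Finset.range p, φ (fun j => c ((k : ℤ) + ((j : ℕ) : ℤ)))) ↔
    (∀ c : ℤ → Fin q, {i : ℤ | c i ≠ 0}.Finite →
        ∑ᶠ k : ℤ, φ (fun j => F c (k + ((j : ℕ) : ℤ))) =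
        ∑ᶠ k : ℤ, φ (fun j => c (k + ((j : ℕ) : ℤ)))) := by
  obtain rfl : F = blockMap f := funext fun c => funext (hF c)
  have key := forall_periodic_sum_window_eq_iff_forall_finite_finsum_window_eq
    (g₁ := pullbackRule f φ) (g₂ := fun w => φ (w ∘ Fin.castAdd n)) (pullbackRule_zero hf0 hφ0) hφ0
  simp only [pullbackRule_window, window_comp_castAdd] at key
  exact key

/-- Equivalence between conservation of an additive quantity on periodic
configurations and on finite configurations (generalized Durand–Formenti–Róka theorem). -/
theorem periodic_conservation_iff_finite_conservation
    (q n b : ℕ) [NeZero q] (hn : 1 ≤ n) (hb : 1 ≤ b)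
    (f : (Fin n → Fin q) → Fin q) (hf0 : f (fun _ => 0) = 0)
    (φ : (Fin b → Fin q) → ℝ) (hφ0 : φ (fun _ => 0) = 0)
    (F : (ℤ → Fin q) → ℤ → Fin q)
    (hF : ∀ (c : ℤ → Fin q) (i : ℤ), F c i = f (fun t => c (i + ((t : ℕ) : ℤ)))) :
    (∀ p : ℕ, 1 ≤ p → ∀ c : ℤ → Fin q, (∀ i : ℤ, c (i + (p : ℤ)) = c i) →
        ∑ k ∈ Finset.range p, φ (fun j => F c ((k : ℤ) + ((j : ℕ) : ℤ))) =
        ∑ k ∈ Finset.range p, φ (fun j => c ((k : ℤ) + ((j : ℕ) : ℤ)))) ↔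
    (∀ c : ℤ → Fin q, {i : ℤ | c i ≠ 0}.Finite →
        ∑ᶠ k : ℤ, φ (fun j => F c (k + ((j : ℕ) : ℤ))) =
        ∑ᶠ k : ℤ, φ (fun j => c (k + ((j : ℕ) : ℤ)))) :=
  periodic_conservation_iff_finite_conservation_general q n b f hf0 φ hφ0 F hF
end

section
/- (Hattori–Takesue characterization.) Let Q = {0,…,q−1}, f : Q^n → Q, and F(c)_i = f(c_i,…,c_{i+n−1}) for c ∈ Q^ℤ. Fix b ≥ 1 and φ : Q^b → ℝ, and define φ_f : Q^{b+n−1} → ℝ by φ_f(y_0,…,y_{b+n−2}) = φ(f(y_0,…,y_{n−1}), f(y_1,…,y_n), …, f(y_{b−1},…,y_{b+n−2})). Let a ∈ Q be arbitrary. Then φ is an additive conserved quantity for F (i.e. for every p ≥ 1 and every p-periodic c ∈ Q^ℤ, ∑_{k=0}^{p−1} φ(F(c)_k,…,F(c)_{k+b−1}) = ∑_{k=0}^{p−1} φ(c_k,…,c_{k+b−1})) if and only if for all x_0,…,x_{b+n−2} ∈ Q: φ_f(x_0,…,x_{b+n−2}) − φ(x_0,…,x_{b−1}) = ∑_{i=1}^{b+n−2}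 [ φ_f(a^i, x_1,…,x_{b+n−1−i}) − φ_f(a^i, x_0,…,x_{b+n−2−i}) ] + ∑_{i=1}^{b−1} [ φ(a^{b−i}, x_0,…,x_{i−1}) − φ(a^{b−i}, x_1,…,x_i) ], where a^i denotes i consecutive copies of a. -/
/-!
Write `G = φ_f - φ` for the change of `φ` under one step of the automaton; it reads a window of
length `L = b + n - 1`, and conservation says exactly that `G` sums to zero over every period of
every periodic configuration. If `G x = H (σ x) - H x` with `σ` the shift, these sums telescope
to zero. Conversely, comparing the sums over the periodic configurations with periods
`x₀ ⋯ x_{L-1} a^L` and `x₁ ⋯ x_{L-1} a^(L+1)` isolates `G x` as `D (σ x) - D x` with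
`D y = ∑_{0 < i < L} G (a^i y)`; by locality, the `φ`-part of `D` reduces to the second sum
of the statement.
-/

open Finset

section LocalObservable

variable {α : Type*}

def padLeft (a : α) (m : ℕ) (y : ℕ → α) : ℕ → α :=
  fun t => if t < m then a else y (t - m)

def PeriodicSumsVanish {M : Type*} [AddCommMonoid M] (G : (ℕ → α) → M) : Prop :=
  ∀ p : ℕ, 1 ≤ p → ∀ c : ℤ → α, (∀ i : ℤ, c (i + p) = c i) →
    ∑ k ∈ range p, G (fun t => c (k + t)) = 0

theorem DependsOn.sub {ι M : Type*} [Sub M] {G G' : (ι → α) → M} {s : Set ι}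
    (hG : DependsOn G s) (hG' : DependsOn G' s) : DependsOn (fun y => G y - G' y) s :=
  fun _ _ h => congrArg₂ (· - ·) (hG h) (hG' h)

theorem dependsOn_prefix {β : Type*} {b : ℕ} (φ : (Fin b → α) → β) :
    DependsOn (fun y : ℕ → α => φ (fun k => y k)) (Set.Iio b) :=
  fun _ _ h => congrArg φ (funext fun k => h k k.isLt)

theorem dependsOn_prefix_localRule {β : Type*} {n b : ℕ} (f : (Fin n → α) → α)
    (φ : (Fin b → α) → β) :
    DependsOn (fun y : ℕ → α => φ (fun k => f (fun t => y (k + t)))) (Set.Iio (b + n - 1)) :=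
  fun _ _ h => congrArg φ (funext fun k => congrArg f (funext fun t =>
    h _ (by simp only [Set.mem_Iio]; omega)))

theorem dependsOn_comp_padLeft {β : Type*} {G : (ℕ → α) → β} {L : ℕ}
    (hG : DependsOn G (Set.Iio L)) (a : α) (i : ℕ) :
    DependsOn (fun y => G (padLeft a i y)) (Set.Iio (L - i)) := by
  intro y z hyz
  refine hG fun t ht => ?_
  simp only [Set.mem_Iio] at ht hyz
  simp only [padLeft]
  split_ifs
  · rfl
  · exact hyz _ (by omega)

variable {M : Type*} [AddCommGroup M]

theorem periodicSumsVanish_of_eq_shift_sub {G : (ℕ → α) → M} (H : (ℕ → α) → M)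
    (hG : ∀ x, G x = H (fun t => x (t + 1)) - H x) : PeriodicSumsVanish G := by
  intro p _ c hc
  set W : ℕ → M := fun k => H (fun t => c (k + t))
  have hstep : ∀ k : ℕ, G (fun t => c (k + t)) = W (k + 1) - W k := fun k => by
    rw [hG]
    congr 3 with t
    push_cast
    ring_nf
  have hperiod : W p = W 0 := by
    simp only [W]
    congr 1 with t
    rw [add_comm, hc, Nat.cast_zero, zero_add]
  rw [sum_congr rfl fun k _ => hstep k, sum_range_sub, hperiod, sub_self]

/-- `c` repeats `w₀ ⋯ w_{2L-1} = w₀ ⋯ w_{L-1} a^L`: its windows starting at `k ≤ L` are read off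
`w`, and those starting at `L < k < 2L` are `a^(2L-k) w`. -/
theorem sum_shift_add_sum_padLeft_eq_zero {G : (ℕ → α) → M} {L : ℕ} (hL : 1 ≤ L) (a : α)
    (hG : DependsOn G (Set.Iio L)) (h : PeriodicSumsVanish G) {w : ℕ → α}
    (hw : ∀ s, L ≤ s → w s = a) :
    ∑ k ∈ range (L + 1), G (fun t => w (k + t)) + ∑ i ∈ Ico 1 L, G (padLeft a i w) = 0 := by
  set c : ℤ → α := fun i => w (i % ((2 * L : ℕ) : ℤ)).toNat
  have hc_period : ∀ i, c (i + (2 * L : ℕ)) = c i := fun i => by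
    simp only [c, Int.add_emod_right]
  have hc_lt : ∀ s < 2 * L, c s = w s := fun s hs => by
    simp only [c]
    rw [← Int.natCast_mod, Nat.mod_eq_of_lt hs, Int.toNat_natCast]
  have hc_ge : ∀ s, 2 * L ≤ s → s < 4 * L → c s = w (s - 2 * L) := fun s h₁ h₂ => by
    have hs : (s : ℤ) = (s - 2 * L : ℕ) + (2 * L : ℕ) := by push_cast [h₁]; ring
    rw [hs, hc_period, hc_lt _ (by omega)]
  have hdirect : ∀ k ∈ range (L + 1), G (fun t => c (k + t)) = G (fun t => w (k + t)) :=
    fun k hk => hG fun t ht => by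
      simp only [mem_range, Set.mem_Iio] at hk ht
      exact_mod_cast hc_lt (k + t) (by omega)
  have hwrap : ∀ k ∈ Ico (L + 1) (2 * L),
      G (fun t => c (k + t)) = G (padLeft a (2 * L - k) w) := fun k hk => hG fun t ht => by
    simp only [mem_Ico, Set.mem_Iio] at hk ht
    simp only [padLeft]
    split_ifs with hkt
    · rw [← hw (k + t) (by omega)]
      exact_mod_cast hc_lt (k + t) (by omega)
    · rw [show t - (2 * L - k) = k + t - 2 * L by omega]
      exact_mod_cast hc_ge (k + t) (by omega) (by omega)
  have hsum := h (2 * L) (by omega) c hc_period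
  rwa [← sum_range_add_sum_Ico _ (show L + 1 ≤ 2 * L by omega), sum_congr rfl hdirect,
    sum_congr rfl hwrap, sum_Ico_reflect (fun i => G (padLeft a i w)) _ le_self_add,
    show 2 * L + 1 - 2 * L = 1 by omega, show 2 * L + 1 - (L + 1) = L by omega] at hsum

theorem eq_shift_sub_of_periodicSumsVanish {G : (ℕ → α) → M} {L : ℕ} (a : α)
    (hG : DependsOn G (Set.Iio L)) (h : PeriodicSumsVanish G) (x : ℕ → α) :
    G x = ∑ i ∈ Ico 1 L, G (padLeft a i (fun t => x (t + 1))) -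
      ∑ i ∈ Ico 1 L, G (padLeft a i x) := by
  obtain rfl | hL := L.eq_zero_or_pos
  · simp only [Ico_eq_empty_of_le zero_le_one, sum_empty, sub_zero]
    rw [hG (y := fun _ => x 0) fun t ht => absurd ht (Nat.not_lt_zero t)]
    simpa using h 1 le_rfl (fun _ => x 0) fun _ => rfl
  set u : ℕ → α := fun t => if t < L then x t else a
  set S : ℕ → M := fun k => G (fun t => u (k + t))
  have hconst : G (fun _ => a) = 0 := by simpa using h 1 le_rfl (fun _ => a) fun _ => rfl
  have hcycle := sum_shift_add_sum_padLeft_eq_zero hL a hG h (w := u)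
    fun s hs => if_neg (by omega)
  have hcycle_shift := sum_shift_add_sum_padLeft_eq_zero hL a hG h (w := fun t => u (t + 1))
    fun s hs => if_neg (by omega)
  have htel : ∑ k ∈ range (L + 1), S k - ∑ k ∈ range (L + 1), S (k + 1) = G u := by
    rw [← sum_sub_distrib, sum_range_sub']
    have hlast : S (L + 1) = 0 := by
      rw [← hconst]
      exact congrArg G (funext fun t => if_neg (by omega))
    simp [S, hlast]
  have hux : ∀ t ∈ Set.Iio L, u t = x t := fun t ht => if_pos ht
  have hG_u : G u = G x := hG hux
  have hD_u : ∀ i ∈ Ico 1 L, G (padLeft a i u) = G (padLeft a i x) := fun i _ =>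
    dependsOn_comp_padLeft hG a i fun t ht => hux t (by simp only [Set.mem_Iio] at *; omega)
  have hD_shift : ∀ i ∈ Ico 1 L, G (padLeft a i (fun t => u (t + 1))) =
      G (padLeft a i (fun t => x (t + 1))) := fun i hi =>
    dependsOn_comp_padLeft hG a i fun t ht =>
      hux (t + 1) (by simp only [mem_Ico, Set.mem_Iio] at *; omega)
  simp only [add_right_comm _ _ 1] at hcycle_shift
  rw [← hG_u, ← htel, ← sum_congr rfl hD_u, ← sum_congr rfl hD_shift,
    eq_neg_of_add_eq_zero_left hcycle, eq_neg_of_add_eq_zero_left hcycle_shift]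
  abel

theorem sum_padLeft_sub_eq_sum_reflect {ψ : (ℕ → α) → M} {b L : ℕ} (a : α)
    (hψ : DependsOn ψ (Set.Iio b)) (hbL : b ≤ L) (y z : ℕ → α) :
    ∑ i ∈ Ico 1 L, (ψ (padLeft a i y) - ψ (padLeft a i z)) =
      ∑ i ∈ Ico 1 b, (ψ (padLeft a (b - i) y) - ψ (padLeft a (b - i) z)) := by
  rw [sum_Ico_reflect (fun i => ψ (padLeft a i y) - ψ (padLeft a i z)) _ le_self_add,
    Nat.add_sub_cancel_left, Nat.add_sub_cancel]
  refine (sum_subset (Ico_subset_Ico_right hbL) fun i hi hib => ?_).symm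
  simp only [mem_Ico, not_and, not_lt] at hi hib
  rw [sub_eq_zero]
  exact hψ fun t ht => by
    simp only [Set.mem_Iio] at ht
    simp only [padLeft, if_pos (show t < i by omega)]

end LocalObservable

theorem Nat.Icc_one_sub_one_right_eq_Ico (N : ℕ) : Icc 1 (N - 1) = Ico 1 N := by
  ext
  simp only [mem_Icc, mem_Ico]
  omega

theorem hattori_takesue_general
    (q n b : ℕ) (hn : 1 ≤ n)
    (f : (Fin n → Fin q) → Fin q)
    (φ : (Fin b → Fin q) → ℝ)
    (a : Fin q)
    (F : (ℤ → Fin q) → ℤ → Fin q)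
    (hF : ∀ (c : ℤ → Fin q) (i : ℤ), F c i = f (fun t => c (i + ((t : ℕ) : ℤ))))
    (φf : (ℕ → Fin q) → ℝ)
    (hφf : ∀ y, φf y = φ (fun k => f (fun t => y ((k : ℕ) + (t : ℕ)))))
    (φ' : (ℕ → Fin q) → ℝ)
    (hφ' : ∀ y, φ' y = φ (fun k => y (k : ℕ)))
    (pad : ℕ → (ℕ → Fin q) → ℕ → Fin q)
    (hpad : ∀ m y t, pad m y t = if t < m then a else y (t - m)) :
    (∀ p : ℕ, 1 ≤ p → ∀ c : ℤ → Fin q, (∀ i : ℤ, c (i + (p : ℤ)) = c i) →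
        ∑ k ∈ Finset.range p, φ (fun j => F c ((k : ℤ) + ((j : ℕ) : ℤ))) =
        ∑ k ∈ Finset.range p, φ (fun j => c ((k : ℤ) + ((j : ℕ) : ℤ)))) ↔
    (∀ x : ℕ → Fin q,
        φf x - φ' x =
          (∑ i ∈ Finset.Icc 1 (b + n - 2),
              (φf (pad i (fun t => x (t + 1))) - φf (pad i x))) +
          (∑ i ∈ Finset.Icc 1 (b - 1),
              (φ' (pad (b - i) x) - φ' (pad (b - i) (fun t => x (t + 1)))))) := by
  obtain rfl : pad = padLeft a := funext fun m => funext fun y => funext (hpad m y)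
  set G : (ℕ → Fin q) → ℝ := fun y => φf y - φ' y
  have hφ'_loc : DependsOn φ' (Set.Iio b) := fun y z h => by
    simpa only [hφ'] using dependsOn_prefix φ h
  have hG_loc : DependsOn G (Set.Iio (b + n - 1)) := DependsOn.sub
    (fun y z h => by simpa only [hφf] using dependsOn_prefix_localRule f φ h)
    (hφ'_loc.mono (Set.Iio_subset_Iio (by omega)))
  have hwindow : ∀ (c : ℤ → Fin q) (k : ℕ),
      φ (fun j => F c ((k : ℤ) + ((j : ℕ) : ℤ))) - φ (fun j => c ((k : ℤ) + ((j : ℕ) : ℤ))) =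
        G (fun t => c (k + t)) := fun c k => by
    simp only [G, hφf, hφ', hF]
    congr 3 with j
    congr 2 with t
    push_cast
    ring_nf
  trans PeriodicSumsVanish G
  · simp only [PeriodicSumsVanish, ← hwindow, sum_sub_distrib, sub_eq_zero]
  rw [show b + n - 2 = b + n - 1 - 1 by omega, Nat.Icc_one_sub_one_right_eq_Ico,
    Nat.Icc_one_sub_one_right_eq_Ico]
  constructor
  · intro h x
    have hφ'_part := sum_padLeft_sub_eq_sum_reflect a hφ'_loc (L := b + n - 1) (by omega)
      (fun t => x (t + 1)) x
    change G x = _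
    rw [eq_shift_sub_of_periodicSumsVanish a hG_loc h x]
    simp only [G, sum_sub_distrib] at hφ'_part ⊢
    linarith
  · intro h
    refine periodicSumsVanish_of_eq_shift_sub (fun y => ∑ i ∈ Ico 1 (b + n - 1),
      φf (padLeft a i y) - ∑ i ∈ Ico 1 b, φ' (padLeft a (b - i) y)) fun x => ?_
    simp only [G, h x, sum_sub_distrib]
    ring

/-- Hattori–Takesue characterization of additive conserved quantities.
Vectors of length `b + n - 1` are encoded as functions `ℕ → Fin q` (only the coordinates
`0, …, b + n - 2` are ever read).  `φf` is the map `φ_f`, `φ'` is `φ` read on the first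
`b` coordinates, and `pad m y` is the word `a^m y_0 y_1 ⋯`. -/
theorem hattori_takesue
    (q n b : ℕ) [NeZero q] (hn : 1 ≤ n) (hb : 1 ≤ b)
    (f : (Fin n → Fin q) → Fin q)
    (φ : (Fin b → Fin q) → ℝ)
    (a : Fin q)
    (F : (ℤ → Fin q) → ℤ → Fin q)
    (hF : ∀ (c : ℤ → Fin q) (i : ℤ), F c i = f (fun t => c (i + ((t : ℕ) : ℤ))))
    (φf : (ℕ → Fin q) → ℝ)
    (hφf : ∀ y, φf y = φ (fun k => f (fun t => y ((k : ℕ) + (t : ℕ)))))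
    (φ' : (ℕ → Fin q) → ℝ)
    (hφ' : ∀ y, φ' y = φ (fun k => y (k : ℕ)))
    (pad : ℕ → (ℕ → Fin q) → ℕ → Fin q)
    (hpad : ∀ m y t, pad m y t = if t < m then a else y (t - m)) :
    (∀ p : ℕ, 1 ≤ p → ∀ c : ℤ → Fin q, (∀ i : ℤ, c (i + (p : ℤ)) = c i) →
        ∑ k ∈ Finset.range p, φ (fun j => F c ((k : ℤ) + ((j : ℕ) : ℤ))) =
        ∑ k ∈ Finset.range p, φ (fun j => c ((k : ℤ) + ((j : ℕ) : ℤ)))) ↔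
    (∀ x : ℕ → Fin q,
        φf x - φ' x =
          (∑ i ∈ Finset.Icc 1 (b + n - 2),
              (φf (pad i (fun t => x (t + 1))) - φf (pad i x))) +
          (∑ i ∈ Finset.Icc 1 (b - 1),
              (φ' (pad (b - i) x) - φ' (pad (b - i) (fun t => x (t + 1)))))) :=
  hattori_takesue_general q n b hn f φ a F hF φf hφf φ' hφ' pad hpad
end

section
/- Let Q = {0,1,2} and define f : Q^2 → Q by f(x_1,x_2) = 2 if x_1 = 2; f(x_1,x_2) = 1 if x_1 ∈ {0,1} and x_2 = 1; and f(x_1,x_2) = 0 otherwise. Then f is non-increasing (f ∈ CA^-(3,2)), but there is no conservative rule h ∈ CA^0(3,2) that dominates f (i.e. no conservative h : Q^2 → Q with f(w) ≤ h(w) for all w ∈ Q^2). -/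
/-- A local rule `f ∈ CA(q,n)` is conservative (`f ∈ CA^0(q,n)`) if for every period
`p ≥ 1` and every `p`-periodic (circular) word `w`, the sum of the images over one period
equals the sum of the states over one period. -/
def Conserves (q n : ℕ) (f : (Fin n → Fin q) → Fin q) : Prop :=
  ∀ p : ℕ, 1 ≤ p → ∀ w : ℤ → Fin q, (∀ i : ℤ, w (i + (p : ℤ)) = w i) →
    ∑ k ∈ Finset.range p, ((f (fun t => w ((k : ℤ) + ((t : ℕ) : ℤ)))) : ℤ) =
    ∑ k ∈ Finset.range p, ((w (k : ℤ)) : ℤ)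

/-- A local rule `f ∈ CA(q,n)` is non-increasing (`f ∈ CA^-(q,n)`) if for every period
`p ≥ 1` and every `p`-periodic (circular) word `w`, the sum of the images over one period
is at most the sum of the states over one period. -/
def NonIncreasing (q n : ℕ) (f : (Fin n → Fin q) → Fin q) : Prop :=
  ∀ p : ℕ, 1 ≤ p → ∀ w : ℤ → Fin q, (∀ i : ℤ, w (i + (p : ℤ)) = w i) →
    ∑ k ∈ Finset.range p, ((f (fun t => w ((k : ℤ) + ((t : ℕ) : ℤ)))) : ℤ) ≤
    ∑ k ∈ Finset.range p, ((w (k : ℤ)) : ℤ)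

/-! The rule is bounded cellwise by a left charge `2·[a = 2]` plus a right charge `[b = 1]`;
on a circular word the right charges can be shifted one cell back, and each cell then carries
at most its own state, so `f` is non-increasing. A conservative `h ≥ f` must have `h(2, b) = 2`;
conservation on the word `12` forces `h(1, 2) = 1`, and then on the word `012` it forces
`h(0, 1) = 0 < f(0, 1)`. -/

open Finset

theorem sum_range_comp_succ_of_eq {M : Type*} [AddCancelCommMonoid M] (g : ℕ → M) {p : ℕ}
    (hg : g p = g 0) : ∑ k ∈ range p, g (k + 1) = ∑ k ∈ range p, g k :=
  add_right_cancel (b := g 0) <| by rw [← sum_range_succ', sum_range_succ, hg]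

theorem nonIncreasing_of_le_add {q : ℕ} {f : (Fin 2 → Fin q) → Fin q} (L R : Fin q → ℤ)
    (hf : ∀ x, (f x : ℤ) ≤ L (x 0) + R (x 1)) (hLR : ∀ a, L a + R a ≤ a) :
    NonIncreasing q 2 f := by
  intro p _ w hw
  have hR : ∑ k ∈ range p, R (w ((k : ℤ) + 1)) = ∑ k ∈ range p, R (w k) := by
    simpa using
      sum_range_comp_succ_of_eq (fun k : ℕ => R (w k)) (by simpa using congrArg R (hw 0))
  calc ∑ k ∈ range p, (f fun t => w (k + (t : ℕ)) : ℤ)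
      ≤ ∑ k ∈ range p, (L (w k) + R (w (k + 1))) :=
        sum_le_sum fun k _ => (hf _).trans_eq (by simp)
    _ = ∑ k ∈ range p, (L (w k) + R (w k)) := by rw [sum_add_distrib, sum_add_distrib, hR]
    _ ≤ ∑ k ∈ range p, (w k : ℤ) := sum_le_sum fun k _ => hLR _

namespace Conserves

variable {q : ℕ} {h : (Fin 2 → Fin q) → Fin q}

theorem sum_range_zmod (hh : Conserves q 2 h) (p : ℕ) (u : ZMod p → Fin q) :
    ∑ k ∈ range p, (h ![u k, u (k + 1)] : ℤ) = ∑ k ∈ range p, (u k : ℤ) := by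
  rcases p.eq_zero_or_pos with rfl | hp
  · simp
  have hw : ∀ i : ℤ, u ((i + p : ℤ) : ZMod p) = u (i : ZMod p) := fun i => by simp
  convert hh p hp (fun i => u i) hw using 3 with k _ k _
  · congr 2
    funext t
    fin_cases t <;> simp
  · simp

theorem add_swap (hh : Conserves q 2 h) (a b : Fin q) :
    (h ![a, b] : ℤ) + h ![b, a] = a + b := by
  simpa [sum_range_succ, show (1 + 1 : ZMod 2) = 0 from rfl] using hh.sum_range_zmod 2 ![a, b]

theorem add_cycle (hh : Conserves q 2 h) (a b c : Fin q) :
    (h ![a, b] : ℤ) + h ![b, c] + h ![c, a] = a + b + c := by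
  simpa [sum_range_succ, show (1 + 1 : ZMod 3) = 2 from rfl, show (2 + 1 : ZMod 3) = 0 from rfl]
    using hh.sum_range_zmod 3 ![a, b, c]

end Conserves

/-- the rule `f(x₁,x₂) = 2` if `x₁ = 2`, `= 1` if `x₁ ∈ {0,1}` and `x₂ = 1`,
`= 0` otherwise, is non-increasing but is dominated by no conservative rule. -/
theorem nonincreasing_not_dominated
    (f : (Fin 2 → Fin 3) → Fin 3)
    (hf : ∀ x : Fin 2 → Fin 3,
      f x = if x 0 = 2 then 2 else if x 1 = 1 then 1 else 0) :
    NonIncreasing 3 2 f ∧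
      ¬ ∃ h : (Fin 2 → Fin 3) → Fin 3,
          Conserves 3 2 h ∧ ∀ w : Fin 2 → Fin 3, f w ≤ h w := by
  refine ⟨nonIncreasing_of_le_add (fun a => if a = 2 then 2 else 0)
    (fun b => if b = 1 then 1 else 0) (fun x => ?_) (by decide), ?_⟩
  · rw [hf]
    generalize x 0 = a, x 1 = b
    revert a b
    decide
  rintro ⟨h, hc, hd⟩
  have h2 (b : Fin 3) : h ![2, b] = 2 :=
    le_antisymm (Fin.le_last _) (by simpa [hf] using hd ![2, b])
  have h01 : (1 : ℤ) ≤ h ![0, 1] := by simpa [hf, Fin.le_def] using hd ![0, 1]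
  have swap := hc.add_swap 1 2
  have cycle := hc.add_cycle 0 1 2
  simp only [h2] at swap cycle
  norm_num at swap cycle
  omega
end

section
/- Let Q = {0,…,q−1}, n ≥ 2, and f : Q^n → Q. Let L(q,n) be the set of circular words w : ℤ/pℤ → Q (p ≥ 1) such that the circular factors of length n−1 at distinct positions are pairwise distinct, i.e. (w_{i}, w_{i+1}, …, w_{i+n−2}) ≠ (w_{j}, w_{j+1}, …, w_{j+n−2}) (indices mod p) whenever i ≢ j (mod p). Then f is non-increasing (f ∈ CA^-(q,n)) if and only if S_f(w) ≤ S(w) holds for every w ∈ L(q,n). -/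
/-!
If a circular word of period `p` has two positions `i < j` carrying the same factor of
length `n - 1`, it can be cut at `i` and `j` into two circular words, of periods `j - i` and
`p - (j - i)`, whose windows of length `n` are exactly the windows of the original word at the
corresponding positions. Both `S_f` and `S` are additive under this cut, so by strong induction
on the period it suffices to check `S_f ≤ S` on words without repeated factors.
-/

open Finset Function

def excess {q n : ℕ} (f : (Fin n → Fin q) → Fin q) (w : ℤ → Fin q) (x : ℤ) : ℤ :=
  (f (fun t => w (x + (t : ℕ))) : ℤ) - (w x : ℤ)

theorem sum_le_sum_iff_sum_excess_nonpos {q n : ℕ} (f : (Fin n → Fin q) → Fin q)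
    (w : ℤ → Fin q) (p : ℕ) :
    ∑ k ∈ range p, (f (fun t => w ((k : ℤ) + (t : ℕ))) : ℤ) ≤ ∑ k ∈ range p, (w k : ℤ) ↔
      ∑ k ∈ range p, excess f w k ≤ 0 := by
  simp only [excess, sum_sub_distrib, sub_nonpos]

theorem Function.Periodic.excess {q n : ℕ} (f : (Fin n → Fin q) → Fin q) {w : ℤ → Fin q}
    {c : ℤ} (hw : Periodic w c) : Periodic (excess f w) c := fun x => by
  have hwin : (fun t : Fin n => w (x + c + (t : ℕ))) = fun t : Fin n => w (x + (t : ℕ)) :=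
    funext fun t => by rw [add_right_comm, hw]
  simp only [_root_.excess, hwin, hw x]

theorem Function.Periodic.sum_range_shift {M : Type*} [AddCancelCommMonoid M] {g : ℤ → M}
    {p : ℕ} (hg : Periodic g p) (a : ℤ) :
    ∑ k ∈ range p, g (a + k) = ∑ k ∈ range p, g k := by
  have step : ∀ b : ℤ, ∑ k ∈ range p, g (b + 1 + k) = ∑ k ∈ range p, g (b + k) := by
    intro b
    have h := (sum_range_succ' (fun k : ℕ => g (b + k)) p).symm.trans
      (sum_range_succ (fun k : ℕ => g (b + k)) p)
    simp only [Nat.cast_succ, Nat.cast_zero, add_zero, hg b, ← add_assoc,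
      add_right_comm b _ 1] at h
    exact add_right_cancel h
  induction a using Int.induction_on with
  | zero => simp
  | succ i ih => rw [step, ih]
  | pred i ih => rw [← ih, ← step, sub_add_cancel]

theorem Function.Periodic.sum_range_split {M : Type*} [AddCancelCommMonoid M] {g : ℤ → M}
    {p : ℕ} (hg : Periodic g p) (a : ℤ) {d : ℕ} (hd : d ≤ p) :
    ∑ k ∈ range p, g k = ∑ k ∈ range d, g (a + k) + ∑ k ∈ range (p - d), g (a + d + k) := by
  obtain ⟨e, rfl⟩ := Nat.exists_eq_add_of_le hd
  calc ∑ k ∈ range (d + e), g k = ∑ k ∈ range (d + e), g (a + k) := (hg.sum_range_shift a).symm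
    _ = _ := by simp only [Finset.sum_range_add, Nat.add_sub_cancel_left, Nat.cast_add, add_assoc]

theorem apply_emod_eq_of_shift_eq {α : Type*} {x : ℤ → α} {d m : ℕ} (hd : 0 < d)
    (h : ∀ t : ℕ, t < m → x (d + t) = x t) :
    ∀ s : ℕ, s < d + m → x ((s : ℤ) % d) = x s := by
  refine fun s => Nat.strong_induction_on s fun s ih hs => ?_
  rcases lt_or_ge s d with hsd | hsd
  · rw [Int.emod_eq_of_lt (by positivity) (by exact_mod_cast hsd)]
  · obtain ⟨t, rfl⟩ := Nat.exists_eq_add_of_le hsd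
    push_cast
    rw [Int.add_emod_left, ih t (by omega) (by omega), h t (by omega)]

theorem sum_excess_congr {q n : ℕ} (f : (Fin n → Fin q) → Fin q) {u w : ℤ → Fin q} {a : ℤ}
    {m : ℕ} (h : ∀ s : ℕ, s < m + (n - 1) → u s = w (a + s)) :
    ∑ k ∈ range m, excess f u k = ∑ k ∈ range m, excess f w (a + k) := by
  refine sum_congr rfl fun k hk => ?_
  rw [mem_range] at hk
  have hwin : (fun t : Fin n => u (k + (t : ℕ))) = fun t : Fin n => w (a + k + (t : ℕ)) := by
    funext t
    have := h (k + t) (by omega)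
    push_cast at this
    rw [this, add_assoc]
  simp only [excess, hwin, h k (by omega)]

theorem exists_periodic_sum_excess_eq {q n : ℕ} (f : (Fin n → Fin q) → Fin q) {w : ℤ → Fin q}
    {a : ℤ} {d : ℕ} (hd : 0 < d) (hfac : ∀ t : ℕ, t < n - 1 → w (a + d + t) = w (a + t)) :
    ∃ u : ℤ → Fin q, Periodic u d ∧
      ∑ k ∈ range d, excess f u k = ∑ k ∈ range d, excess f w (a + k) := by
  -- `u` repeats `w` on `[a, a + d)`; thanks to `hfac` it agrees with `w` on
  -- `[a, a + d + n - 1)`, which contains every window starting in `[a, a + d)`.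
  refine ⟨fun x => w (a + x % d), fun x => by simp only [Int.add_emod_right], ?_⟩
  refine sum_excess_congr f (apply_emod_eq_of_shift_eq (x := fun s => w (a + s)) hd fun t ht => ?_)
  simpa only [add_assoc] using hfac t ht

theorem exists_split_of_factor_eq {q n : ℕ} (f : (Fin n → Fin q) → Fin q) {w : ℤ → Fin q}
    {p : ℕ} (hw : Periodic w p) {a : ℤ} {d : ℕ} (hd : 0 < d) (hdp : d < p)
    (hfac : ∀ t : ℕ, t < n - 1 → w (a + d + t) = w (a + t)) :
    ∃ u v : ℤ → Fin q, Periodic u d ∧ Periodic v (p - d : ℕ) ∧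
      ∑ k ∈ range p, excess f w k =
        ∑ k ∈ range d, excess f u k + ∑ k ∈ range (p - d), excess f v k := by
  obtain ⟨u, hu, hsu⟩ := exists_periodic_sum_excess_eq f hd hfac
  have hfac' : ∀ t : ℕ, t < n - 1 → w (a + d + (p - d : ℕ) + t) = w (a + d + t) := by
    intro t ht
    rw [Nat.cast_sub hdp.le, add_assoc a, add_sub_cancel, add_right_comm, hw, hfac t ht]
  obtain ⟨v, hv, hsv⟩ := exists_periodic_sum_excess_eq f (by omega) hfac'
  exact ⟨u, v, hu, hv, by rw [(hw.excess f).sum_range_split a hdp.le, hsu, hsv]⟩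

theorem nonincreasing_iff_on_L_general
    (q n : ℕ)
    (f : (Fin n → Fin q) → Fin q) :
    NonIncreasing q n f ↔
      (∀ p : ℕ, 1 ≤ p → ∀ w : ℤ → Fin q, (∀ i : ℤ, w (i + (p : ℤ)) = w i) →
        (∀ i ∈ Finset.range p, ∀ j ∈ Finset.range p, i ≠ j →
          ∃ t : Fin (n - 1), w ((i : ℤ) + ((t : ℕ) : ℤ)) ≠ w ((j : ℤ) + ((t : ℕ) : ℤ))) →
        ∑ k ∈ Finset.range p, ((f (fun t => w ((k : ℤ) + ((t : ℕ) : ℤ)))) : ℤ) ≤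
        ∑ k ∈ Finset.range p, ((w (k : ℤ)) : ℤ)) := by
  simp only [NonIncreasing, sum_le_sum_iff_sum_excess_nonpos]
  refine ⟨fun h p hp w hw _ => h p hp w hw, fun H p => ?_⟩
  refine Nat.strong_induction_on p fun p ih hp w hw => ?_
  by_cases hL : ∀ i ∈ range p, ∀ j ∈ range p, i ≠ j →
      ∃ t : Fin (n - 1), w ((i : ℤ) + ((t : ℕ) : ℤ)) ≠ w ((j : ℤ) + ((t : ℕ) : ℤ))
  · exact H p hp w hw hL
  push Not at hL
  obtain ⟨i, hi, j, hj, hij, hfac⟩ := hL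
  rw [mem_range] at hi hj
  wlog hlt : i < j generalizing i j
  · exact this j hj i hi hij.symm (fun t => (hfac t).symm) (by omega)
  obtain ⟨u, v, hu, hv, hsum⟩ := exists_split_of_factor_eq f hw (a := i) (d := j - i)
    (by omega) (by omega) fun t ht => by
      rw [Nat.cast_sub hlt.le, add_sub_cancel]
      exact (hfac ⟨t, ht⟩).symm
  rw [hsum]
  exact add_nonpos (ih _ (by omega) (by omega) u hu) (ih _ (by omega) (by omega) v hv)

/-- `f` is non-increasing iff the non-increasing inequality holds for all
circular words in `L(q,n)`, i.e. those periodic words whose circular factors of length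
`n-1` at distinct positions (mod the period) are pairwise distinct. -/
theorem nonincreasing_iff_on_L
    (q n : ℕ) (hn : 2 ≤ n)
    (f : (Fin n → Fin q) → Fin q) :
    NonIncreasing q n f ↔
      (∀ p : ℕ, 1 ≤ p → ∀ w : ℤ → Fin q, (∀ i : ℤ, w (i + (p : ℤ)) = w i) →
        (∀ i ∈ Finset.range p, ∀ j ∈ Finset.range p, i ≠ j →
          ∃ t : Fin (n - 1), w ((i : ℤ) + ((t : ℕ) : ℤ)) ≠ w ((j : ℤ) + ((t : ℕ) : ℤ))) →
        ∑ k ∈ Finset.range p, ((f (fun t => w ((k : ℤ) + ((t : ℕ) : ℤ)))) : ℤ) ≤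
        ∑ k ∈ Finset.range p, ((w (k : ℤ)) : ℤ)) :=
  nonincreasing_iff_on_L_general q n f
end

section
/- Let Q = {0,…,q−1} and f : Q^n → Q. Then f is non-increasing (f ∈ CA^-(q,n)) if and only if there exists a function p : Q^n × {0,…,n−1} → ℕ such that: (1) ∑_{i=0}^{n−1} p(w,i) = f(w) for all w ∈ Q^n; and (2) for all (w_0,…,w_{2n−2}) ∈ Q^{2n−1}: ∑_{i=0}^{n−1} p((w_{n−1−i},…,w_{2n−2−i}), i) ≤ w_{n−1}. (Interpretation: p(w,i) is the number of particles that the cell holding w_i contributes to the image cell of the window w, so that every non-increasing CA is the projection of a particle automaton with vanishing particles.) -/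
/-! A non-increasing rule makes every cycle of the de Bruijn graph, whose vertices are the states
(words of length `n - 1`) and whose edges are the windows `v` weighted by `v (n - 1) - f v`,
nonnegative. So the graph carries a shortest-path potential `φ` with `φ s ≤ ∑ s` and
`f v + φ (tail v) ≤ v (n - 1) + φ (init v)`. Read `φ s` as particles in transit, stored in the
rightmost cells of `s`; a cell of a window releases what it held before the update minus what it
holds after. The releases of a window add up to at least `f v`, and along the `n` windows
containing a cell they telescope to its letter; trimming them down to `f v` gives `P`. -/

open Finset

theorem Finset.exists_le_sum_eq {ι : Type*} (s : Finset ι) (r : ι → ℕ) {c : ℕ}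
    (hc : c ≤ ∑ i ∈ s, r i) : ∃ p : ι → ℕ, p ≤ r ∧ ∑ i ∈ s, p i = c := by
  classical
  induction s using Finset.induction_on generalizing c with
  | empty => exact ⟨0, fun _ => Nat.zero_le _, by simp_all⟩
  | insert a s ha ih =>
    rw [sum_insert ha] at hc
    obtain ⟨p, hpr, hps⟩ := ih (min_le_right c (∑ i ∈ s, r i))
    refine ⟨Function.update p a (c - min c (∑ i ∈ s, r i)), fun i => ?_, ?_⟩
    · rcases eq_or_ne i a with rfl | hi
      · simp only [Function.update_self]; omega
      · simpa [hi] using hpr i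
    · rw [sum_insert ha, Function.update_self, sum_congr rfl fun i hi =>
        Function.update_of_ne (ne_of_mem_of_not_mem hi ha) _ _, hps]
      omega

theorem Function.Periodic.sum_range_comp_sub {M : Type*} [AddCancelCommMonoid M] {G : ℤ → M}
    {p : ℕ} (hG : Function.Periodic G p) (i : ℕ) :
    ∑ k ∈ range p, G (k - i) = ∑ k ∈ range p, G k := by
  induction i with
  | zero => simp
  | succ i ih =>
    set H : ℕ → M := fun k => G (k - (i + 1))
    have hH : H p = H 0 := by
      simp only [H, Nat.cast_zero, zero_sub, ← hG (-(i + 1))]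
      ring_nf
    have hshift := (sum_range_succ' H p).symm.trans (sum_range_succ H p)
    rw [hH, add_left_inj] at hshift
    calc ∑ k ∈ range p, G (k - (i + 1 : ℕ)) = ∑ k ∈ range p, H k := by simp [H]
      _ = ∑ k ∈ range p, G (k - i) := by
        rw [← hshift]; refine sum_congr rfl fun k _ => ?_; simp only [H]; push_cast; ring_nf
      _ = ∑ k ∈ range p, G k := ih

namespace LocalRule

section Fill

variable {N : ℕ} (a : Fin N → ℕ)

def suffixSum (j : ℕ) : ℕ := ∑ t : Fin N, if j ≤ (t : ℕ) then a t else 0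

theorem suffixSum_zero : suffixSum a 0 = ∑ t, a t := by simp [suffixSum]

theorem suffixSum_eq_zero {j : ℕ} (hj : N ≤ j) : suffixSum a j = 0 :=
  sum_eq_zero fun t _ => if_neg (by omega)

theorem suffixSum_eq_add (j : Fin N) : suffixSum a j = a j + suffixSum a (j + 1) := by
  have hsplit : ∀ t : Fin N, (if (j : ℕ) ≤ t then a t else 0) =
      (if j = t then a t else 0) + (if (j : ℕ) + 1 ≤ t then a t else 0) := by
    intro t
    rcases eq_or_ne j t with rfl | hjt
    · simp
    · have := Fin.val_ne_of_ne hjt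
      simp only [hjt, if_false, zero_add]
      split_ifs <;> omega
  simp only [suffixSum, hsplit, sum_add_distrib, sum_ite_eq, mem_univ, if_true]

/-- Stores a budget `b` of particles in cells of capacities `a`, filling from the right;
the result is the number of particles in cell `j`. -/
def fillFromRight (b : ℕ) (j : Fin N) : ℕ := min b (suffixSum a j) - min b (suffixSum a (j + 1))

theorem fillFromRight_le (b : ℕ) (j : Fin N) : fillFromRight a b j ≤ a j := by
  have := suffixSum_eq_add a j
  simp only [fillFromRight]
  omega

theorem sum_fillFromRight (b : ℕ) : ∑ j, fillFromRight a b j = min b (∑ t, a t) := by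
  set g : ℕ → ℕ := fun j => min b (suffixSum a j)
  have hg : ∀ j ∈ range N, g (j + 1) ≤ g j := fun j hj => by
    have := suffixSum_eq_add a ⟨j, mem_range.mp hj⟩
    dsimp only at this
    simp only [g]; omega
  have htele : ((∑ j ∈ range N, (g j - g (j + 1)) : ℕ) : ℤ) = g 0 - g N := by
    rw [Nat.cast_sum, sum_congr rfl fun j hj => Nat.cast_sub (hg j hj), sum_range_sub']
  simp only [fillFromRight]
  rw [Fin.sum_univ_eq_sum_range (fun j => g j - g (j + 1)) N]
  simp only [g] at htele
  rw [suffixSum_eq_zero a le_rfl, suffixSum_zero, _root_.min_zero, Nat.cast_zero, sub_zero]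
    at htele
  exact_mod_cast htele

end Fill

theorem suffixSum_tail {N : ℕ} (a : Fin (N + 1) → ℕ) {k : ℕ} (hk : k < N) :
    suffixSum (Fin.tail a) k = suffixSum (Fin.init a) (k + 1) + a (Fin.last N) := by
  have hsucc := Fin.sum_univ_succ fun u : Fin (N + 1) => if k + 1 ≤ (u : ℕ) then a u else 0
  rw [Fin.sum_univ_castSucc] at hsucc
  simp only [Fin.val_succ, Fin.val_castSucc, Fin.val_last, Fin.val_zero, add_le_add_iff_right,
    show k + 1 ≤ N by omega, show ¬ k + 1 ≤ 0 by omega, if_true, if_false, zero_add] at hsucc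
  exact hsucc.symm

variable {q N : ℕ}

def window {L : ℕ} (x : ℕ → Fin q) (k : ℕ) : Fin L → Fin q := fun t => x (k + t)

theorem init_window (x : ℕ → Fin q) (k : ℕ) :
    Fin.init (window x k : Fin (N + 1) → Fin q) = window x k := rfl

theorem tail_window (x : ℕ → Fin q) (k : ℕ) :
    Fin.tail (window x k : Fin (N + 1) → Fin q) = window x (k + 1) := by
  funext t
  simp only [Fin.tail, window, Fin.val_succ]
  ring_nf

variable (f : (Fin (N + 1) → Fin q) → Fin q)

def imageSum (x : ℕ → Fin q) (m : ℕ) : ℕ := ∑ k ∈ range m, (f (window x k) : ℕ)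

/-- The `m` windows lying inside the block `x 0, …, x (m + N - 1)` are windows of the
`(m + N)`-periodic word repeating that block. -/
theorem imageSum_le_of_nonIncreasing (hf : NonIncreasing q (N + 1) f) (x : ℕ → Fin q)
    (m : ℕ) : imageSum f x m ≤ ∑ k ∈ range (m + N), (x k : ℕ) := by
  rcases Nat.eq_zero_or_pos m with rfl | hm
  · simp [imageSum]
  set p := m + N
  set y : ℤ → Fin q := fun j => x (j % p).toNat
  have hy : ∀ j : ℤ, y (j + p) = y j := fun j => by simp [y]
  have hyx : ∀ k < p, y k = x k := fun k hk => by
    simp [y, ← Int.natCast_mod, Nat.mod_eq_of_lt hk]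
  have hwin : ∀ k < m, (fun t : Fin (N + 1) => y (k + (t : ℕ))) = window x k :=
    fun k hk => funext fun t => by
      rw [← Nat.cast_add, hyx _ (by omega)]; rfl
  zify
  calc (imageSum f x m : ℤ)
      = ∑ k ∈ range m, ((f fun t : Fin (N + 1) => y (k + (t : ℕ)) : ℕ) : ℤ) := by
        rw [imageSum, Nat.cast_sum]
        exact sum_congr rfl fun k hk => by rw [hwin k (mem_range.mp hk)]
    _ ≤ ∑ k ∈ range p, ((f fun t : Fin (N + 1) => y (k + (t : ℕ)) : ℕ) : ℤ) :=
        sum_le_sum_of_subset_of_nonneg (range_subset_range.mpr (by omega)) fun _ _ _ =>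
          Nat.cast_nonneg _
    _ ≤ ∑ k ∈ range p, ((y k : ℕ) : ℤ) := hf p (by omega) y hy
    _ = ∑ k ∈ range p, ((x k : ℕ) : ℤ) :=
        sum_congr rfl fun k hk => by rw [hyx k (mem_range.mp hk)]

def excessBounds (s : Fin N → Fin q) : Set ℕ :=
  {c | ∃ (x : ℕ → Fin q) (m : ℕ), window x m = s ∧
    ∑ k ∈ range (m + N), (x k : ℕ) ≤ imageSum f x m + c}

/-- A shortest-path potential on the de Bruijn graph of states, whose edges are the windows `v`
weighted by `v (Fin.last N) - f v`. -/
noncomputable def potential (s : Fin N → Fin q) : ℕ := sInf (excessBounds f s)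

theorem sum_mem_excessBounds [NeZero q] (s : Fin N → Fin q) :
    ∑ t, (s t : ℕ) ∈ excessBounds f s := by
  refine ⟨fun k => if h : k < N then s ⟨k, h⟩ else 0, 0,
    funext fun t => by simp [window], ?_⟩
  rw [zero_add, ← Fin.sum_univ_eq_sum_range]
  simp [imageSum]

theorem potential_le_sum [NeZero q] (s : Fin N → Fin q) : potential f s ≤ ∑ t, (s t : ℕ) :=
  Nat.sInf_le (sum_mem_excessBounds f s)

theorem potential_mem_excessBounds [NeZero q] (s : Fin N → Fin q) :
    potential f s ∈ excessBounds f s :=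
  Nat.sInf_mem ⟨_, sum_mem_excessBounds f s⟩

/-- Extending an optimal word for `Fin.init v` by the letter `v (Fin.last N)` gives a word
ending in `Fin.tail v`. -/
theorem add_potential_tail_le [NeZero q] (hf : NonIncreasing q (N + 1) f)
    (v : Fin (N + 1) → Fin q) :
    (f v : ℕ) + potential f (Fin.tail v) ≤ v (Fin.last N) + potential f (Fin.init v) := by
  obtain ⟨x, m, hxv, hx⟩ := potential_mem_excessBounds f (Fin.init v)
  set x' := Function.update x (m + N) (v (Fin.last N))
  have hx'x : ∀ k < m + N, x' k = x k := fun k hk => Function.update_of_ne (by omega) _ _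
  have hx'last : x' (m + N) = v (Fin.last N) := Function.update_self _ _ _
  have hwin : window x' m = v := by
    funext t
    rcases Fin.eq_castSucc_or_eq_last t with ⟨t, rfl⟩ | rfl
    · rw [window, hx'x _ (by simp)]
      exact congrFun hxv t
    · exact hx'last
  have hsum : ∑ k ∈ range (m + 1 + N), (x' k : ℕ) =
      ∑ k ∈ range (m + N), (x k : ℕ) + v (Fin.last N) := by
    rw [show m + 1 + N = m + N + 1 by omega, sum_range_succ, hx'last]
    congr 1
    exact sum_congr rfl fun k hk => by rw [hx'x k (mem_range.mp hk)]
  have himage : imageSum f x' (m + 1) = imageSum f x m + f v := by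
    rw [imageSum, sum_range_succ, hwin]
    congr 1
    refine sum_congr rfl fun k hk => congrArg _ (congrArg f (funext fun t => hx'x _ ?_))
    have := mem_range.mp hk; omega
  have hbound := imageSum_le_of_nonIncreasing f hf x' (m + 1)
  have hmem : potential f (Fin.init v) + v (Fin.last N) - f v ∈ excessBounds f (Fin.tail v) :=
    ⟨x', m + 1, by rw [← tail_window, hwin], by omega⟩
  have := Nat.sInf_le hmem
  unfold potential at *
  omega

noncomputable def held (s : Fin N → Fin q) : Fin N → ℕ :=
  fillFromRight (fun t => (s t : ℕ)) (potential f s)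

noncomputable def heldBefore (v : Fin (N + 1) → Fin q) : Fin (N + 1) → ℕ :=
  Fin.snoc (held f (Fin.init v)) (v (Fin.last N) : ℕ)

noncomputable def heldAfter (v : Fin (N + 1) → Fin q) : Fin (N + 1) → ℕ :=
  Fin.cons 0 (held f (Fin.tail v))

noncomputable def released (v : Fin (N + 1) → Fin q) (i : Fin (N + 1)) : ℕ :=
  heldBefore f v i - heldAfter f v i

theorem sum_held [NeZero q] (s : Fin N → Fin q) : ∑ j, held f s j = potential f s := by
  rw [held, sum_fillFromRight, min_eq_left (potential_le_sum f s)]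

theorem sum_heldBefore [NeZero q] (v : Fin (N + 1) → Fin q) :
    ∑ i, heldBefore f v i = potential f (Fin.init v) + v (Fin.last N) := by
  rw [heldBefore, Fin.sum_snoc, sum_held]

theorem sum_heldAfter [NeZero q] (v : Fin (N + 1) → Fin q) :
    ∑ i, heldAfter f v i = potential f (Fin.tail v) := by
  rw [heldAfter, Fin.sum_cons, sum_held, zero_add]

theorem held_tail_le_held_init [NeZero q] (hf : NonIncreasing q (N + 1) f)
    (v : Fin (N + 1) → Fin q) (j : Fin N) (hj : (j : ℕ) + 1 < N) :
    held f (Fin.tail v) j ≤ held f (Fin.init v) ⟨j + 1, hj⟩ := by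
  set a : Fin (N + 1) → ℕ := fun t => (v t : ℕ)
  have h₀ := suffixSum_tail a (k := j) (by omega)
  have h₁ := suffixSum_tail a (k := j + 1) hj
  have h₂ := suffixSum_eq_add (Fin.init a) ⟨j + 1, hj⟩
  have hpot := add_potential_tail_le f hf v
  simp only [held, fillFromRight]
  change min _ (suffixSum (Fin.tail a) j) - min _ (suffixSum (Fin.tail a) (j + 1)) ≤
    min _ (suffixSum (Fin.init a) (j + 1)) - min _ (suffixSum (Fin.init a) (j + 1 + 1))
  have he : a (Fin.last N) = v (Fin.last N) := rfl
  rw [he] at h₀ h₁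
  omega

theorem heldAfter_le_heldBefore [NeZero q] (hf : NonIncreasing q (N + 1) f)
    (v : Fin (N + 1) → Fin q) (i : Fin (N + 1)) : heldAfter f v i ≤ heldBefore f v i := by
  induction i using Fin.cases with
  | zero => simp [heldAfter]
  | succ j =>
    simp only [heldAfter, heldBefore, Fin.cons_succ]
    by_cases hj : (j : ℕ) + 1 < N
    · rw [show j.succ = Fin.castSucc ⟨j + 1, hj⟩ from Fin.ext rfl, Fin.snoc_castSucc]
      exact held_tail_le_held_init f hf v j hj
    · have hlast : j.succ = Fin.last N := Fin.ext (by simp; omega)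
      rw [hlast, Fin.snoc_last]
      calc held f (Fin.tail v) j ≤ (Fin.tail v j : ℕ) := fillFromRight_le _ _ _
        _ = v (Fin.last N) := by rw [Fin.tail, hlast]

theorem sum_released_add_sum_heldAfter [NeZero q] (hf : NonIncreasing q (N + 1) f)
    (V : Fin (N + 1) → Fin (N + 1) → Fin q) :
    ∑ i, released f (V i) i + ∑ i, heldAfter f (V i) i = ∑ i, heldBefore f (V i) i := by
  rw [← sum_add_distrib]
  exact sum_congr rfl fun i _ => Nat.sub_add_cancel (heldAfter_le_heldBefore f hf _ i)

theorem le_sum_released [NeZero q] (hf : NonIncreasing q (N + 1) f) (v : Fin (N + 1) → Fin q) :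
    (f v : ℕ) ≤ ∑ i, released f v i := by
  have := sum_released_add_sum_heldAfter f hf fun _ => v
  rw [sum_heldBefore, sum_heldAfter] at this
  have := add_potential_tail_le f hf v
  omega

theorem sum_released_window [NeZero q] (hf : NonIncreasing q (N + 1) f) (w : ℕ → Fin q) :
    ∑ i : Fin (N + 1), released f (window w (N - i)) i = w N := by
  have := sum_released_add_sum_heldAfter f hf fun i => window w (N - i)
  rw [Fin.sum_univ_castSucc (fun i => heldBefore f _ i),
    Fin.sum_univ_succ (fun i => heldAfter f _ i)] at this
  simp only [heldBefore, heldAfter, Fin.snoc_castSucc, Fin.snoc_last, Fin.cons_zero, Fin.cons_succ,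
    init_window, tail_window, Fin.val_castSucc, Fin.val_succ, Fin.val_last, zero_add] at this
  have hidx : ∀ j : Fin N, N - (j + 1) + 1 = N - j := fun j => by omega
  simp only [hidx, Nat.sub_self] at this
  have hlast : window w 0 (Fin.last N) = w N := by simp [window]
  rw [hlast] at this
  omega

theorem exists_particles_of_nonIncreasing [NeZero q] (hf : NonIncreasing q (N + 1) f) :
    ∃ P : (Fin (N + 1) → Fin q) → Fin (N + 1) → ℕ,
      (∀ v, ∑ i, P v i = (f v : ℕ)) ∧
      ∀ w : ℕ → Fin q, ∑ i : Fin (N + 1), P (window w (N - i)) i ≤ w N := by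
  choose P hP hPsum using fun v => exists_le_sum_eq univ (released f v) (le_sum_released f hf v)
  exact ⟨P, hPsum, fun w =>
    (sum_le_sum fun i _ => hP _ i).trans (sum_released_window f hf w).le⟩

/-- Each cell `c` of a periodic word is the cell `i` of the window starting at `c - i`. -/
theorem nonIncreasing_of_particles (P : (Fin (N + 1) → Fin q) → Fin (N + 1) → ℕ)
    (hP : ∀ v, ∑ i, P v i = (f v : ℕ))
    (hPw : ∀ w : ℕ → Fin q, ∑ i : Fin (N + 1), P (window w (N - i)) i ≤ w N) :
    NonIncreasing q (N + 1) f := by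
  intro p _ w hw
  set G : Fin (N + 1) → ℤ → ℤ := fun i j => P (fun t => w (j + (t : ℕ))) i
  have hG : ∀ i, Function.Periodic (G i) p := fun i j => by
    simp only [G, add_right_comm j (p : ℤ), hw]
  have hcell : ∀ c : ℕ, ∑ i, G i (c - (i : ℕ)) ≤ w c := fun c => by
    set u : ℕ → Fin q := fun t => w (c - N + t)
    have hwin : ∀ i : Fin (N + 1),
        window u (N - i) = fun t : Fin (N + 1) => w (c - (i : ℕ) + (t : ℕ)) :=
      fun i => funext fun t => by
        simp only [window, u]; push_cast [Nat.cast_sub (Nat.le_of_lt_succ i.isLt)]; ring_nf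
    calc ∑ i, G i (c - (i : ℕ))
        = ((∑ i : Fin (N + 1), P (window u (N - i)) i : ℕ) : ℤ) := by
          rw [Nat.cast_sum]; simp only [hwin, G]
      _ ≤ ((u N : ℕ) : ℤ) := by exact_mod_cast hPw u
      _ = w c := by simp only [u, sub_add_cancel]
  calc ∑ k ∈ range p, ((f fun t => w (k + (t : ℕ)) : ℕ) : ℤ)
      = ∑ k ∈ range p, ∑ i, G i k := sum_congr rfl fun k _ => by simp [G, ← hP]
    _ = ∑ i, ∑ k ∈ range p, G i k := sum_comm
    _ = ∑ i, ∑ k ∈ range p, G i (k - (i : ℕ)) :=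
      sum_congr rfl fun i _ => ((hG i).sum_range_comp_sub i).symm
    _ = ∑ k ∈ range p, ∑ i, G i (k - (i : ℕ)) := sum_comm
    _ ≤ ∑ k ∈ range p, ((w k : ℕ) : ℤ) := sum_le_sum fun c _ => hcell c

end LocalRule

/-- Words of length `2n-1` in condition (2) are encoded as functions `ℕ → Fin q`, of which only
the coordinates `0,…,2n-2` are read. -/
theorem nonincreasing_iff_particle_representation
    (q n : ℕ) (hn : 1 ≤ n)
    (f : (Fin n → Fin q) → Fin q) :
    NonIncreasing q n f ↔
      ∃ P : (Fin n → Fin q) → Fin n → ℕ,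
        (∀ w : Fin n → Fin q, ∑ i : Fin n, P w i = ((f w : ℕ))) ∧
        (∀ w : ℕ → Fin q,
          ∑ i : Fin n, P (fun t => w (n - 1 - (i : ℕ) + (t : ℕ))) i ≤ ((w (n - 1) : ℕ))) := by
  obtain ⟨N, rfl⟩ : ∃ N, n = N + 1 := ⟨n - 1, by omega⟩
  simp only [Nat.add_sub_cancel]
  refine ⟨fun hf => ?_, fun ⟨P, hP, hPw⟩ => LocalRule.nonIncreasing_of_particles f P hP hPw⟩
  rcases Nat.eq_zero_or_pos q with rfl | hq
  · exact ⟨0, fun v => (v 0).elim0, fun w => (w 0).elim0⟩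
  · have : NeZero q := ⟨hq.ne'⟩
    exact LocalRule.exists_particles_of_nonIncreasing f hf
end

section
/- Let Q = {0,…,q−1} and f : Q^n → Q. For α ∈ Q let δ_α : Q → {0,1} be δ_α(x) = 1 if x = α and 0 otherwise. Say that f is state-conserving if for every p ≥ 1, every circular word w : ℤ/pℤ → Q, and every α ∈ Q: ∑_{k=0}^{p−1} δ_α(f(w_k,…,w_{k+n−1})) = ∑_{k=0}^{p−1} δ_α(w_k) (indices mod p). Then f is state-conserving if and only if for all α ∈ Q and all (x_1,…,x_n) ∈ Q^n: δ_α(f(x_1,…,x_n)) = δ_α(x_1) + ∑_{k=1}^{n−1} [ δ_α(f(0^{n−k}, x_2,…,x_{k+1})) − δ_α(f(0^{n−k}, x_1,…,x_k)) ], where 0^{n−k} denotes n−k consecutive zeros. -/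
/-- `delta α x = 1` if `x = α` and `0` otherwise. -/
def delta {q : ℕ} (α x : Fin q) : ℤ := if x = α then 1 else 0

/-- A local rule `f ∈ CA(q,n)` is state-conserving if, for every period `p ≥ 1`, every
`p`-periodic (circular) word `w` and every state `α`, the number of cells in state `α`
over one period is preserved by the rule. -/
def StateConserving (q n : ℕ) (f : (Fin n → Fin q) → Fin q) : Prop :=
  ∀ p : ℕ, 1 ≤ p → ∀ w : ℤ → Fin q, (∀ i : ℤ, w (i + (p : ℤ)) = w i) → ∀ α : Fin q,
    ∑ k ∈ Finset.range p, delta α (f (fun t => w ((k : ℤ) + ((t : ℕ) : ℤ)))) =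
    ∑ k ∈ Finset.range p, delta α (w (k : ℤ))

/-!
The right-hand side of the characterization says that `δ_α(f(x)) - δ_α(x₀) = J(σx) - J(x)`,
where `σ` is the shift and `J(x) = ∑_{k=1}^{n-1} δ_α(f(0^{n-k} x₀ ⋯ x_{k-1}))` is the number of
cells in state `α` that the rule produces from the boundary between the zero background and `x`.
Summed over a period, such a local conservation law telescopes to `0`. Conversely, comparing the
conservation law on the circular words `0^{n-1} x₀ ⋯ x_n` and `0^{n-1} x₁ ⋯ x_n`, all the
windows lying inside `x` cancel, and what is left is the identity for `x`.
-/

section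

variable {q n : ℕ} [NeZero q] {f : (Fin n → Fin q) → Fin q}

def zeroPad (m : ℕ) (y : ℕ → Fin q) (t : ℕ) : Fin q :=
  if t < m then 0 else y (t - m)

def stateFlux (f : (Fin n → Fin q) → Fin q) (α : Fin q) (y : ℕ → Fin q) : ℤ :=
  ∑ k ∈ Finset.Icc 1 (n - 1), delta α (f fun t => zeroPad (n - k) y t)

lemma stateFlux_congr (α : Fin q) {y y' : ℕ → Fin q}
    (h : ∀ t < n, y t = y' t) : stateFlux f α y = stateFlux f α y' :=
  Finset.sum_congr rfl fun k _ => congrArg (delta α) (congrArg f (funext fun t => by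
    unfold zeroPad; split_ifs
    exacts [rfl, h _ ((Nat.sub_le _ _).trans_lt t.isLt)]))

lemma StateConserving.of_stateFlux
    (H : ∀ α x, delta α (f fun t => x t) - delta α (x 0) =
      stateFlux f α (fun t => x (t + 1)) - stateFlux f α x) :
    StateConserving q n f := by
  intro p _ w hw α
  let window : ℕ → ℕ → Fin q := fun k s => w ((k : ℤ) + (s : ℤ))
  have hshift : ∀ k, (fun t => window k (t + 1)) = window (k + 1) := fun k => by
    funext t; simp only [window]; push_cast; ring_nf
  have hperiod : window p = window 0 := by
    funext s; simp only [window]; rw [add_comm, hw]; simp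
  have hsum : ∑ k ∈ Finset.range p,
      (delta α (f fun t => window k t) - delta α (window k 0)) = 0 := by
    simp only [H, hshift, Finset.sum_range_sub (fun k => stateFlux f α (window k)), hperiod,
      sub_self]
  simpa [window, Finset.sum_sub_distrib, sub_eq_zero] using hsum

/-- The circular word `v₀ ⋯ v_{p-1}` may be read through windows of the linear word `v`, because
the windows that wrap around only see the zeros at both ends of `v`. -/
lemma StateConserving.sum_window_eq (hf : StateConserving q n f) (v : ℕ → Fin q)
    {p : ℕ} (hp : 1 ≤ p) (hlow : ∀ t < n - 1, v t = 0) (hhigh : ∀ t ≥ p, v t = 0) (α : Fin q) :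
    ∑ k ∈ Finset.range p, delta α (f fun t => v (k + t)) =
      ∑ k ∈ Finset.range p, delta α (v k) := by
  have hmod : ∀ a : ℕ, ((a : ℤ) % (p : ℤ)).toNat = a % p := fun a => by omega
  have hw : ∀ i : ℤ, v ((i + p) % p).toNat = v (i % p).toNat := fun i => by simp
  have h := hf p hp (fun i => v (i % p).toNat) hw α
  simp only [← Nat.cast_add, hmod] at h
  convert h using 3 with k hk k hk
  · refine congrArg f (funext fun t => ?_)
    rw [Finset.mem_range] at hk
    have := t.isLt
    by_cases hkt : k + t < p
    · rw [Nat.mod_eq_of_lt hkt]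
    · have := Nat.mod_le (k + t - p) p
      rw [hhigh _ (by omega), hlow _ (by rw [Nat.mod_eq_sub_mod (by omega)]; omega)]
  · rw [Finset.mem_range] at hk
    rw [Nat.mod_eq_of_lt hk]

/-- Conservation on the circular word `0^{n-1} y₀ ⋯ y_{N-1}`. -/
lemma StateConserving.stateFlux_add_sum (hf : StateConserving q n f) (α : Fin q)
    {y : ℕ → Fin q} {N : ℕ} (hy : ∀ t ≥ N, y t = 0) (hN : 1 ≤ n - 1 + N) :
    stateFlux f α y + ∑ k ∈ Finset.range N, delta α (f fun t => y (k + t)) =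
      (n - 1) • delta α 0 + ∑ k ∈ Finset.range N, delta α (y k) := by
  have h := hf.sum_window_eq (zeroPad (n - 1) y) hN (fun t ht => if_pos ht)
    (fun t ht => by unfold zeroPad; rw [if_neg (by omega), hy _ (by omega)]) α
  rw [Finset.sum_range_add, Finset.sum_range_add] at h
  convert h using 2
  · refine Finset.sum_nbij' (· - 1) (· + 1) ?_ ?_ ?_ ?_ ?_ <;>
      intro k hk <;> simp only [Finset.mem_Icc, Finset.mem_range] at hk ⊢
    · omega
    · omega
    · omega
    · omega
    · refine congrArg (delta α) (congrArg f (funext fun t => ?_))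
      unfold zeroPad
      by_cases ht : (t : ℕ) < n - k
      · rw [if_pos ht, if_pos (by omega)]
      · rw [if_neg ht, if_neg (by omega)]; congr 1; omega
  · refine Finset.sum_congr rfl fun k _ => congrArg (delta α) (congrArg f (funext fun t => ?_))
    unfold zeroPad; rw [if_neg (by omega)]; congr 1; omega
  · rw [Finset.sum_congr rfl fun k hk => by rw [zeroPad, if_pos (Finset.mem_range.mp hk)]]
    simp
  · refine Finset.sum_congr rfl fun k _ => ?_
    unfold zeroPad; rw [if_neg (by omega)]; congr 2; omega

lemma StateConserving.delta_sub_delta_eq (hf : StateConserving q n f) (hn : 1 ≤ n)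
    (α : Fin q) (x : ℕ → Fin q) :
    delta α (f fun t => x t) - delta α (x 0) =
      stateFlux f α (fun t => x (t + 1)) - stateFlux f α x := by
  let z : ℕ → Fin q := fun t => if t ≤ n then x t else 0
  have hz := hf.stateFlux_add_sum α (y := z) (N := n + 1)
    (fun t ht => if_neg (by omega)) (by omega)
  have hz' := hf.stateFlux_add_sum α (y := fun t => z (t + 1)) (N := n)
    (fun t ht => if_neg (by omega)) (by omega)
  rw [Finset.sum_range_succ', Finset.sum_range_succ'] at hz
  simp only [add_right_comm _ 1] at hz
  have hfz : f (fun t => z (0 + t)) = f (fun t => x t) :=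
    congrArg f (funext fun t => by simp only [z, zero_add]; exact if_pos t.isLt.le)
  rw [hfz, stateFlux_congr α (f := f) (y' := x) fun t ht => if_pos (by omega)] at hz
  rw [stateFlux_congr α (f := f) (y' := fun t => x (t + 1)) fun t ht => if_pos (by omega)] at hz'
  have hz0 : z 0 = x 0 := if_pos (Nat.zero_le n)
  rw [hz0] at hz
  linarith

end

/-- characterization of state-conserving rules.  Words of length `n` are
encoded as functions `ℕ → Fin q` (only coordinates `0,…,n-1` are read); `g` is `f` read
on the first `n` coordinates, and `pad m y` is the word `0^m y_0 y_1 ⋯`. -/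
theorem state_conserving_iff
    (q n : ℕ) [NeZero q] (hn : 1 ≤ n)
    (f : (Fin n → Fin q) → Fin q)
    (g : (ℕ → Fin q) → Fin q) (hg : ∀ y, g y = f (fun t => y (t : ℕ)))
    (pad : ℕ → (ℕ → Fin q) → ℕ → Fin q)
    (hpad : ∀ m y t, pad m y t = if t < m then 0 else y (t - m)) :
    StateConserving q n f ↔
      ∀ (α : Fin q) (x : ℕ → Fin q),
        delta α (g x) = delta α (x 0) +
          ∑ k ∈ Finset.Icc 1 (n - 1),
            (delta α (g (pad (n - k) (fun t => x (t + 1)))) -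
             delta α (g (pad (n - k) x))) := by
  obtain rfl : g = fun y => f fun t => y t := funext hg
  obtain rfl : pad = zeroPad := by funext m y t; exact hpad m y t
  constructor
  · intro hf α x
    have h := hf.delta_sub_delta_eq hn α x
    unfold stateFlux at h
    rw [Finset.sum_sub_distrib]
    linarith
  · intro H
    refine StateConserving.of_stateFlux fun α x => ?_
    have h := H α x
    rw [Finset.sum_sub_distrib] at h
    unfold stateFlux
    linarith
end

section
/- Let G be a particle automaton with states Q = {0,…,q−1} and neighborhood N = {−ℓ,…,r}, and let n = ℓ + r + 1. Then the global map G : Q^ℤ → Q^ℤ of G is a cellular automaton with neighborhood of size 2n−1: there exists a unique local rule f : Q^{2(ℓ+r)+1} → Q such that G(c)_i = f(c_{i−(ℓ+r)}, …, c_{i+(ℓ+r)}) for all c ∈ Q^ℤ and all i ∈ ℤ. -/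
/-- A particle automaton (PA) with states `Q = {0,…,q−1}` and neighborhood
`N = {−L,…,R}`.  For each state `v` and each context
`(u, u') ∈ Q^L × Q^R` (the states of the `L` cells to the left and the `R` cells to the
right), `g v u u'` is a list of `v` values in `N ∪ {†}`, encoded as `Option ℤ` where
`none` is the vanishing symbol `†` and `some d` is a displacement `d ∈ {−L,…,R}`. -/
structure PA (q L R : ℕ) where
  g : (v : Fin q) → (Fin L → Fin q) → (Fin R → Fin q) → Fin (v : ℕ) → Option ℤ
  mem_range : ∀ v u u' k d, g v u u' k = some d → -(L : ℤ) ≤ d ∧ d ≤ (R : ℤ)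

namespace PA

variable {q L R : ℕ}

/-- `N(c,j,i)`: the number of particles sent from cell `j` to cell `i` in
configuration `c`. -/
def count (A : PA q L R) (c : ℤ → Fin q) (j i : ℤ) : ℕ :=
  (Finset.univ.filter fun k : Fin ((c j : ℕ)) =>
    A.g (c j) (fun t => c (j - (L : ℤ) + ((t : ℕ) : ℤ)))
      (fun t => c (j + 1 + ((t : ℕ) : ℤ))) k = some (i - j)).card

/-- The global map of the PA: `G(c)_i = min(q−1, ∑_{j∈ℤ} N(c,j,i))`. -/
noncomputable def glob [NeZero q] (A : PA q L R) (c : ℤ → Fin q) (i : ℤ) : Fin q :=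
  ⟨min (q - 1) (∑ᶠ j : ℤ, A.count c j i),
    lt_of_le_of_lt (Nat.min_le_left _ _)
      (by have := Nat.pos_of_ne_zero (NeZero.ne q); omega)⟩

/-- A PA is conservative if no entry of any `g_v` on any context is `†`, and the total
number of particles arriving at any cell is at most `q − 1` (no overflow). -/
def Conservative (A : PA q L R) : Prop :=
  (∀ v u u' k, A.g v u u' k ≠ none) ∧
  (∀ (c : ℤ → Fin q) (i : ℤ), (∑ᶠ j : ℤ, A.count c j i) ≤ q - 1)

end PA

/-!
A cell `j` emits its particles according to its own state and those of the cells in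
`j + [-ℓ, r]`, and every particle moves by a displacement in `[-ℓ, r]`. Hence cell `i` only
receives particles from cells `j ∈ i + [-r, ℓ]`, whose emissions are determined by the
configuration on `i + [-(ℓ + r), ℓ + r]`. Since the rule is the same at every cell, `G(c)_i` is
a fixed function of that window; the function is unique because every word of length
`2(ℓ + r) + 1` is a window of some configuration.
-/

theorem existsUnique_localRule {α β : Type*} (k : ℕ) (F : (ℤ → α) → ℤ → β)
    (hF : ∀ (c c' : ℤ → α) (i i' : ℤ),
      (∀ z : ℤ, -(k : ℤ) ≤ z → z ≤ k → c (i + z) = c' (i' + z)) → F c i = F c' i') :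
    ∃! f : (Fin (2 * k + 1) → α) → β,
      ∀ (c : ℤ → α) (i : ℤ), F c i = f (fun t => c (i - k + (t : ℕ))) := by
  -- any configuration whose window at `0` is `u` would do
  let extend (u : Fin (2 * k + 1) → α) (z : ℤ) : α := u (Fin.ofNat _ (z + k).toNat)
  have window_extend (u : Fin (2 * k + 1) → α) :
      (fun t : Fin (2 * k + 1) => extend u (0 - k + (t : ℕ))) = u := by
    funext t
    refine congrArg u (Fin.ext ?_)
    rw [Fin.val_ofNat, Nat.mod_eq_of_lt (by omega)]
    omega
  refine ⟨fun u => F (extend u) 0, fun c i => hF _ _ _ _ fun z h₁ h₂ => ?_, ?_⟩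
  · simp only [extend, zero_add]
    refine congrArg c ?_
    rw [Fin.val_ofNat, Nat.mod_eq_of_lt (by omega)]
    omega
  · intro f hf
    funext u
    rw [hf (extend u) 0, window_extend]

namespace PA

variable {q L R : ℕ}

theorem count_eq_zero_of_notMem (A : PA q L R) (c : ℤ → Fin q) {j i : ℤ}
    (hj : j ∉ Set.Icc (i - R) (i + L)) : A.count c j i = 0 := by
  rw [count, Finset.card_eq_zero, Finset.filter_eq_empty_iff]
  intro k _ hk
  have := A.mem_range _ _ _ _ _ hk
  exact hj ⟨by omega, by omega⟩

theorem count_congr (A : PA q L R) {c c' : ℤ → Fin q} {j j' i i' : ℤ}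
    (h : ∀ z : ℤ, -(L : ℤ) ≤ z → z ≤ R → c (j + z) = c' (j' + z))
    (hij : i' - j' = i - j) :
    A.count c j i = A.count c' j' i' := by
  have hc : c' j' = c j := by simpa using (h 0 (by omega) (by omega)).symm
  have hl : (fun t : Fin L => c' (j' - L + (t : ℕ))) =
      fun t : Fin L => c (j - L + (t : ℕ)) := by
    funext t
    have := t.isLt
    rw [show j' - L + (t : ℕ) = j' + ((t : ℕ) - L) by ring,
      show j - L + (t : ℕ) = j + ((t : ℕ) - L) by ring]
    exact (h _ (by omega) (by omega)).symm
  have hr : (fun t : Fin R => c' (j' + 1 + (t : ℕ))) =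
      fun t : Fin R => c (j + 1 + (t : ℕ)) := by
    funext t
    have := t.isLt
    rw [add_assoc, add_assoc]
    exact (h _ (by omega) (by omega)).symm
  rw [count, count, hc, hl, hr, hij]

theorem glob_congr [NeZero q] (A : PA q L R) {c c' : ℤ → Fin q} {i i' : ℤ}
    (h : ∀ z : ℤ, -((L : ℤ) + R) ≤ z → z ≤ (L : ℤ) + R → c (i + z) = c' (i' + z)) :
    A.glob c i = A.glob c' i' := by
  have hcount (j : ℤ) : A.count c j i = A.count c' (j + (i' - i)) i' := by
    by_cases hj : j ∈ Set.Icc (i - R) (i + L)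
    · obtain ⟨hj₁, hj₂⟩ := hj
      refine A.count_congr (fun z h₁ h₂ => ?_) (by ring)
      rw [show j + z = i + (j - i + z) by ring, show j + (i' - i) + z = i' + (j - i + z) by ring]
      exact h _ (by omega) (by omega)
    · rw [A.count_eq_zero_of_notMem c hj, A.count_eq_zero_of_notMem c' fun hj' => hj ?_]
      obtain ⟨hj₁, hj₂⟩ := hj'
      exact ⟨by omega, by omega⟩
  have hsum : ∑ᶠ j : ℤ, A.count c j i = ∑ᶠ j : ℤ, A.count c' j i' := by
    simp only [hcount]
    exact finsum_comp_equiv (Equiv.addRight (i' - i)) (f := fun j => A.count c' j i')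
  simp only [glob, hsum]

end PA

/-- the global map of a particle automaton with neighborhood `{−ℓ,…,r}`
(`n = ℓ + r + 1`) is a cellular automaton whose local rule has `2n − 1 = 2(ℓ+r)+1`
inputs, and this local rule is unique. -/
theorem pa_global_is_ca (q ℓ r : ℕ) [NeZero q] (A : PA q ℓ r) :
    ∃! f : (Fin (2 * (ℓ + r) + 1) → Fin q) → Fin q,
      ∀ (c : ℤ → Fin q) (i : ℤ),
        A.glob c i = f (fun t => c (i - ((ℓ : ℤ) + (r : ℤ)) + ((t : ℕ) : ℤ))) := by
  have := existsUnique_localRule (ℓ + r) A.glob fun c c' i i' h =>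
    A.glob_congr fun z h₁ h₂ => h z (by omega) (by omega)
  exact_mod_cast this
end

section
/- (Fukś–Pivato particle representation.) Let Q = {0,…,q−1}, let f : Q^n → Q be conservative (f ∈ CA^0(q,n)), let 0 ≤ ℓ ≤ n−1, r = n−1−ℓ, and let F : Q^ℤ → Q^ℤ be the CA F(c)_i = f(c_{i−ℓ},…,c_{i+r}). Then there exists a conservative particle automaton G with states Q and neighborhood {−(ℓ+r),…,ℓ+r} whose global map equals F; moreover G can be chosen so that every displacement lies in {−r,…,ℓ}, i.e. every entry of every g_v on every context belongs to {−r,…,ℓ}. -/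
/-!
Number the particles from left to right. For a conservative rule, the flux `Φ(i)`, the net
number of particles crossing from cell `i` to cell `i + 1`, depends only on the cells
`i - ℓ + 1, …, i + r` and satisfies `Φ(i) - Φ(i - 1) = F(c)ᵢ - cᵢ`. So the cumulative output
`Φ(i) + (number of particles up to i)` is nondecreasing, grows by `F(c)ᵢ` at cell `i`, and lies
between the number of particles up to `i - ℓ` and up to `i + r`. Sending every particle to the
first cell at which the cumulative output reaches its number therefore puts `F(c)ᵢ` particles
into cell `i`, moves each particle by at most `ℓ` to the right and `r` to the left, and can be
decided from the cells within distance `ℓ + r`.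
-/

open Finset

namespace Int

variable {M : Type*} [AddCommMonoid M]

theorem sum_Ioc_consecutive (g : ℤ → M) {a b c : ℤ} (hab : a ≤ b) (hbc : b ≤ c) :
    ∑ t ∈ Ioc a b, g t + ∑ t ∈ Ioc b c, g t = ∑ t ∈ Ioc a c, g t := by
  rw [← sum_union (Ioc_disjoint_Ioc_of_le le_rfl), Ioc_union_Ioc_eq_Ioc hab hbc]

theorem sum_Ioc_sub_one_add (g : ℤ → M) {a b : ℤ} (hab : a < b) :
    ∑ t ∈ Ioc a (b - 1), g t + g b = ∑ t ∈ Ioc a b, g t := by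
  rw [← sum_Ioc_consecutive g (by omega : a ≤ b - 1) (by omega : b - 1 ≤ b),
    show Ioc (b - 1) b = {b} by ext; simp; omega, sum_singleton]

theorem sum_Ioc_add_left (g : ℤ → M) (j a b : ℤ) :
    ∑ t ∈ Ioc a b, g (j + t) = ∑ t ∈ Ioc (j + a) (j + b), g t := by
  rw [← map_add_left_Ioc, sum_map]
  rfl

theorem sum_range_add_eq_sum_Ico (g : ℤ → M) (a : ℤ) (P : ℕ) :
    ∑ k ∈ Finset.range P, g (a + k) = ∑ t ∈ Ico a (a + P), g t := by
  rw [Ico_eq_finset_map, sum_map, add_sub_cancel_left, toNat_natCast]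
  rfl

theorem sum_Ioc_sub {G : Type*} [AddCommGroup G] (h : ℤ → G) {a b : ℤ} (hab : a ≤ b) :
    ∑ t ∈ Ioc a b, (h t - h (t - 1)) = h b - h a := by
  induction b, hab using Int.leInduction with
  | base => simp
  | succ b hab ih =>
    rw [← sum_Ioc_sub_one_add _ (by omega : a < b + 1), add_sub_cancel_right, ih]
    abel

end Int

theorem Finset.min'_filter_le_eq_iff {T : ℤ → ℤ} {lo hi p m : ℤ}
    (hT : MonotoneOn T (Set.Icc (lo - 1) hi)) (hlo : T (lo - 1) < p) (hm : m ∈ Icc lo hi)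
    (hne : ((Icc lo hi).filter (p ≤ T ·)).Nonempty) :
    ((Icc lo hi).filter (p ≤ T ·)).min' hne = m ↔ T (m - 1) < p ∧ p ≤ T m := by
  have hS : ∀ x, x ∈ (Icc lo hi).filter (p ≤ T ·) ↔ (lo ≤ x ∧ x ≤ hi) ∧ p ≤ T x := by simp
  rw [mem_Icc] at hm
  constructor
  · rintro rfl
    obtain ⟨hd, hpd⟩ := (hS _).1 (min'_mem _ hne)
    refine ⟨?_, hpd⟩
    rcases eq_or_lt_of_le hd.1 with h | h
    · rwa [← h]
    · by_contra! hle
      have := min'_le _ _ ((hS _).2 ⟨⟨by omega, by omega⟩, hle⟩)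
      omega
  · rintro ⟨hbelow, hat⟩
    refine le_antisymm (min'_le _ m ((hS m).2 ⟨hm, hat⟩)) (le_min' _ _ _ fun d hd => ?_)
    obtain ⟨hd, hpd⟩ := (hS d).1 hd
    by_contra! hdm
    have := hT ⟨by omega, by omega⟩ ⟨by omega, by omega⟩ (by omega : d ≤ m - 1)
    omega

theorem Finset.card_filter_range_add_mem_Ioc (x u v : ℤ) (m : ℕ) :
    (#((range m).filter fun k : ℕ => u < x + k + 1 ∧ x + k + 1 ≤ v) : ℤ) =
      max u (min v (x + m)) - max u (min v x) := by
  have : (range m).filter (fun k : ℕ => u < x + k + 1 ∧ x + k + 1 ≤ v) =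
      Ico (u - x).toNat (min (v - x) m).toNat := by
    ext k
    simp only [mem_filter, mem_range, mem_Ico]
    omega
  rw [this, Nat.card_Ico]
  omega

/-- The first index in `Icc lo hi` at which `T` reaches `p`, and `hi` if there is none. -/
noncomputable def firstReach (T : ℤ → ℤ) (lo hi p : ℤ) : ℤ :=
  if h : ((Icc lo hi).filter (p ≤ T ·)).Nonempty then ((Icc lo hi).filter (p ≤ T ·)).min' h
  else hi

theorem firstReach_mem {T : ℤ → ℤ} {lo hi : ℤ} (p : ℤ) (h : lo ≤ hi) :
    firstReach T lo hi p ∈ Icc lo hi := by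
  unfold firstReach
  split_ifs with hne
  · exact mem_of_mem_filter _ (min'_mem _ hne)
  · exact mem_Icc.2 ⟨h, le_rfl⟩

theorem firstReach_congr {T T' : ℤ → ℤ} {lo hi : ℤ} (p : ℤ)
    (h : ∀ δ ∈ Icc lo hi, T δ = T' δ) : firstReach T lo hi p = firstReach T' lo hi p := by
  have hS : (Icc lo hi).filter (p ≤ T ·) = (Icc lo hi).filter (p ≤ T' ·) :=
    filter_congr fun δ hδ => by rw [h δ hδ]
  unfold firstReach
  simp only [hS]

theorem firstReach_eq_iff {T : ℤ → ℤ} {lo hi p m : ℤ}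
    (hT : MonotoneOn T (Set.Icc (lo - 1) hi)) (hlo : T (lo - 1) < p) (hhi : p ≤ T hi)
    (hm : m ∈ Icc lo hi) :
    firstReach T lo hi p = m ↔ T (m - 1) < p ∧ p ≤ T m := by
  have hhi_mem : hi ∈ Icc lo hi := mem_Icc.2 ⟨(mem_Icc.1 hm).1.trans (mem_Icc.1 hm).2, le_rfl⟩
  have hne : ((Icc lo hi).filter (p ≤ T ·)).Nonempty := ⟨hi, mem_filter.2 ⟨hhi_mem, hhi⟩⟩
  rw [firstReach, dif_pos hne]
  exact min'_filter_le_eq_iff hT hlo hm hne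

namespace LocalRule

variable {q n : ℕ} {f : (Fin n → Fin q) → Fin q} {ℓ r : ℕ}

def ruleAt (f : (Fin n → Fin q) → Fin q) (ℓ : ℕ) (c : ℤ → Fin q) (i : ℤ) : ℤ :=
  ((f fun t => c (i - ℓ + t) : Fin q) : ℕ)

theorem ruleAt_congr (hn : n = ℓ + r + 1) {c c' : ℤ → Fin q} {i : ℤ}
    (h : ∀ t, i - ℓ ≤ t → t ≤ i + r → c t = c' t) : ruleAt f ℓ c i = ruleAt f ℓ c' i := by
  unfold ruleAt
  congr 3
  funext t
  exact h _ (by omega) (by have := t.isLt; omega)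

theorem ruleAt_add_left (c : ℤ → Fin q) (j i : ℤ) :
    ruleAt f ℓ (fun s => c (j + s)) i = ruleAt f ℓ c (j + i) := by
  unfold ruleAt
  simp only [add_sub_assoc, add_assoc]

noncomputable def cumIn (c : ℤ → Fin q) (a m : ℤ) : ℤ := ∑ t ∈ Ioc a m, ((c t : ℕ) : ℤ)

theorem cumIn_add_cumIn (c : ℤ → Fin q) {a b m : ℤ} (hab : a ≤ b) (hbm : b ≤ m) :
    cumIn c a b + cumIn c b m = cumIn c a m :=
  Int.sum_Ioc_consecutive _ hab hbm

theorem cumIn_sub_one_add (c : ℤ → Fin q) {a m : ℤ} (h : a < m) :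
    cumIn c a (m - 1) + (c m : ℕ) = cumIn c a m :=
  Int.sum_Ioc_sub_one_add _ h

theorem cumIn_add_left (c : ℤ → Fin q) (j a m : ℤ) :
    cumIn (fun s => c (j + s)) a m = cumIn c (j + a) (j + m) :=
  Int.sum_Ioc_add_left (fun t => ((c t : ℕ) : ℤ)) j a m

theorem cumIn_congr {c c' : ℤ → Fin q} {a m : ℤ} (h : ∀ t, a < t → t ≤ m → c t = c' t) :
    cumIn c a m = cumIn c' a m :=
  sum_congr rfl fun t ht => by rw [h t (mem_Ioc.1 ht).1 (mem_Ioc.1 ht).2]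

variable [NeZero q]

/-- The net number of particles crossing from cell `i` to cell `i + 1`: cut the configuration
down to the window `Ioc (i - ℓ) (i + r)`, and compare the output of the rule on cells `≤ i` with
the input there. -/
noncomputable def flux (f : (Fin n → Fin q) → Fin q) (ℓ r : ℕ) (c : ℤ → Fin q) (i : ℤ) : ℤ :=
  ∑ j ∈ Ioc (i - ℓ - r) i, ruleAt f ℓ ((Set.Ioc (i - ℓ) (i + r)).indicator c) j -
    cumIn c (i - ℓ) i

theorem flux_congr {c c' : ℤ → Fin q} {i : ℤ} (h : ∀ t, i - ℓ < t → t ≤ i + r → c t = c' t) :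
    flux f ℓ r c i = flux f ℓ r c' i := by
  have hw : (Set.Ioc (i - ℓ) (i + r)).indicator c = (Set.Ioc (i - ℓ) (i + r)).indicator c' :=
    Set.indicator_congr fun t ht => h t ht.1 ht.2
  rw [flux, flux, hw, cumIn_congr fun t h1 h2 => h t h1 (by omega)]

theorem flux_add_left (c : ℤ → Fin q) (j i : ℤ) :
    flux f ℓ r (fun s => c (j + s)) i = flux f ℓ r c (j + i) := by
  have hw : (Set.Ioc (i - ℓ) (i + r)).indicator (fun s => c (j + s)) =
      fun s => (Set.Ioc (j + i - ℓ) (j + i + r)).indicator c (j + s) := by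
    funext s
    simp only [Set.indicator_apply, Set.mem_Ioc]
    split_ifs <;> first | rfl | omega
  rw [flux, flux, hw]
  simp only [ruleAt_add_left, cumIn_add_left, Int.sum_Ioc_add_left (ruleAt f ℓ _)]
  ring_nf

theorem neg_cumIn_le_flux (c : ℤ → Fin q) (i : ℤ) : -cumIn c (i - ℓ) i ≤ flux f ℓ r c i := by
  have : 0 ≤ ∑ j ∈ Ioc (i - ℓ - r) i, ruleAt f ℓ ((Set.Ioc (i - ℓ) (i + r)).indicator c) j :=
    sum_nonneg fun _ _ => Int.natCast_nonneg _
  rw [flux]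
  linarith

/-- The number of particles that the rule puts into the cells `Ioc a m`, up to boundary terms
(exactly that number when `c` vanishes up to `a`). -/
noncomputable def cumOut (f : (Fin n → Fin q) → Fin q) (ℓ r : ℕ) (c : ℤ → Fin q) (a m : ℤ) : ℤ :=
  flux f ℓ r c m + cumIn c a m

theorem cumIn_le_cumOut (c : ℤ → Fin q) {a m : ℤ} (h : a ≤ m - ℓ) :
    cumIn c a (m - ℓ) ≤ cumOut f ℓ r c a m := by
  have := neg_cumIn_le_flux (f := f) (ℓ := ℓ) (r := r) c m
  rw [cumOut, ← cumIn_add_cumIn c h (by omega : m - ℓ ≤ m)]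
  linarith

/-- Where particle number `k` (counting from `0`) of cell `j` goes: the particles are numbered
from left to right, and each one goes to the first cell at which the cumulative output reaches
its number. Counts are taken from the base point `j - r - 1`; only their differences matter. -/
noncomputable def disp (f : (Fin n → Fin q) → Fin q) (ℓ r : ℕ) (c : ℤ → Fin q) (j : ℤ) (k : ℕ) :
    ℤ :=
  firstReach (fun δ => cumOut f ℓ r c (j - r - 1) (j + δ)) (-r) ℓ
    (cumIn c (j - r - 1) (j - 1) + k + 1)

theorem disp_mem (c : ℤ → Fin q) (j : ℤ) (k : ℕ) : disp f ℓ r c j k ∈ Icc (-(r : ℤ)) ℓ :=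
  firstReach_mem _ (by omega)

theorem disp_congr {c c' : ℤ → Fin q} {j : ℤ} (k : ℕ)
    (h : ∀ t, j - (ℓ + r) ≤ t → t ≤ j + (ℓ + r) → c t = c' t) :
    disp f ℓ r c j k = disp f ℓ r c' j k := by
  unfold disp cumOut
  rw [cumIn_congr fun t h1 h2 => h t (by omega) (by omega)]
  refine firstReach_congr _ fun δ hδ => ?_
  rw [mem_Icc] at hδ
  rw [flux_congr fun t h1 h2 => h t (by omega) (by omega),
    cumIn_congr fun t h1 h2 => h t (by omega) (by omega)]

theorem disp_add_left (c : ℤ → Fin q) (j i : ℤ) (k : ℕ) :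
    disp f ℓ r (fun s => c (j + s)) i k = disp f ℓ r c (j + i) k := by
  unfold disp cumOut
  simp only [flux_add_left, cumIn_add_left, add_sub_assoc, add_assoc]

def centeredConfig {L R : ℕ} (v : Fin q) (u : Fin L → Fin q) (u' : Fin R → Fin q) (s : ℤ) :
    Fin q :=
  if s = 0 then v
  else if h : 0 < s ∧ s ≤ R then u' ⟨(s - 1).toNat, by omega⟩
  else if h : -(L : ℤ) ≤ s ∧ s < 0 then u ⟨(s + L).toNat, by omega⟩
  else 0

theorem centeredConfig_context {L R : ℕ} (c : ℤ → Fin q) (j s : ℤ) (hL : -(L : ℤ) ≤ s)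
    (hR : s ≤ R) :
    centeredConfig (c j) (fun t : Fin L => c (j - L + t)) (fun t : Fin R => c (j + 1 + t)) s =
      c (j + s) := by
  unfold centeredConfig
  split_ifs with h0 h1 h2
  · rw [h0, add_zero]
  · dsimp only
    congr 1
    omega
  · dsimp only
    congr 1
    omega
  · omega

noncomputable def particleAutomaton (f : (Fin n → Fin q) → Fin q) (ℓ r : ℕ) :
    PA q (ℓ + r) (ℓ + r) where
  g v u u' k := some (disp f ℓ r (centeredConfig v u u') 0 k)
  mem_range v u u' k d hd := by
    have := mem_Icc.1 (disp_mem (f := f) (ℓ := ℓ) (r := r) (centeredConfig v u u') 0 k)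
    rw [Option.some_inj] at hd
    omega

theorem count_particleAutomaton (c : ℤ → Fin q) (j i : ℤ) :
    (particleAutomaton f ℓ r).count c j i = #{k ∈ range (c j) | disp f ℓ r c j k = i - j} := by
  rw [PA.count, card_filter, card_filter, ← Fin.sum_univ_eq_sum_range]
  refine sum_congr rfl fun k _ => ?_
  simp only [particleAutomaton, Option.some_inj]
  rw [disp_congr (c' := fun s => c (j + s)) k fun t h1 h2 => centeredConfig_context c j t
    (by omega) (by omega), disp_add_left, add_zero]

end LocalRule

namespace Conserves

open LocalRule

variable {q n : ℕ} [NeZero q] {f : (Fin n → Fin q) → Fin q} {ℓ r : ℕ}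

theorem apply_zero (hf : Conserves q n f) : f (fun _ => 0) = 0 := by
  have h := hf 1 le_rfl (fun _ => 0) fun _ => rfl
  simp only [range_one, sum_singleton, Fin.val_zero, Nat.cast_zero, Nat.cast_eq_zero] at h
  exact Fin.ext h

theorem ruleAt_eq_zero (hf : Conserves q n f) (hn : n = ℓ + r + 1) {c : ℤ → Fin q} {i : ℤ}
    (h : ∀ t, i - ℓ ≤ t → t ≤ i + r → c t = 0) : ruleAt f ℓ c i = 0 := by
  rw [ruleAt_congr hn (c' := fun _ => 0) h, ruleAt, hf.apply_zero, Fin.val_zero, Nat.cast_zero]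

theorem sum_ruleAt_Ioc (hf : Conserves q n f) (hn : n = ℓ + r + 1) {c : ℤ → Fin q} {a b : ℤ}
    (hc : ∀ t, t ∉ Ioc a b → c t = 0) :
    ∑ j ∈ Ioc (a - r) (b + ℓ), ruleAt f ℓ c j = cumIn c a b := by
  -- `w` repeats `c` with period `P`; consecutive copies of the support are at least `n - 1`
  -- empty cells apart, so no window of the rule sees two of them.
  set s : ℤ := a - n + 2
  set P : ℕ := (b - a).toNat + n
  set w : ℤ → Fin q := fun t => c (s + t % P)
  have hper : ∀ t, w (t + P) = w t := by simp [w]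
  have hw : ∀ k : ℤ, 0 ≤ k → k < P + n - 1 → w k = c (s + k) := by
    intro k hk0 hk
    by_cases hkP : k < P
    · simp [w, Int.emod_eq_of_lt hk0 hkP]
    · have hmod : k % P = k - P := by
        rw [← Int.sub_emod_right, Int.emod_eq_of_lt (by omega) (by omega)]
      simp only [w, hmod]
      rw [hc (s + (k - P)) (by simp; omega), hc (s + k) (by simp; omega)]
  have hout : ∀ j ∈ Ico (s + ℓ) (s + ℓ + P), j ∉ Ioc (a - r) (b + ℓ) → ruleAt f ℓ c j = 0 := by
    intro j _ hj
    simp only [mem_Ioc, not_and_or, not_lt, not_le] at hj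
    exact hf.ruleAt_eq_zero hn fun t _ _ => hc t (by simp; omega)
  have hout' : ∀ t ∈ Ico s (s + P), t ∉ Ioc a b → ((c t : ℕ) : ℤ) = 0 := fun t _ ht => by
    simp [hc t ht]
  rw [cumIn, sum_subset (fun j hj => by simp only [mem_Ioc, mem_Ico] at hj ⊢; omega) hout,
    sum_subset (fun t ht => by simp only [mem_Ioc, mem_Ico] at ht ⊢; omega) hout',
    ← Int.sum_range_add_eq_sum_Ico, ← Int.sum_range_add_eq_sum_Ico]
  convert hf P (by omega) w hper using 1 <;> refine sum_congr rfl fun k hk => ?_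
  · unfold ruleAt
    congr 3
    funext t
    rw [hw _ (by omega) (by have := t.isLt; simp at hk; omega)]
    ring_nf
  · rw [hw _ (by omega) (by simp at hk; omega)]

theorem sum_ruleAt_indicator (hf : Conserves q n f) (hn : n = ℓ + r + 1) (c : ℤ → Fin q)
    (a b : ℤ) :
    ∑ j ∈ Ioc (a - r) (b + ℓ), ruleAt f ℓ ((Set.Ioc a b).indicator c) j = cumIn c a b := by
  rw [hf.sum_ruleAt_Ioc hn fun t ht => Set.indicator_of_notMem (by simpa using ht) _]
  exact cumIn_congr fun t h1 h2 => Set.indicator_of_mem (Set.mem_Ioc.2 ⟨h1, h2⟩) _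

theorem flux_eq_sub (hf : Conserves q n f) (hn : n = ℓ + r + 1) (c : ℤ → Fin q) (i : ℤ) :
    flux f ℓ r c i = cumIn c i (i + r) -
      ∑ j ∈ Ioc i (i + r + ℓ), ruleAt f ℓ ((Set.Ioc (i - ℓ) (i + r)).indicator c) j := by
  have hcons := hf.sum_ruleAt_indicator hn c (i - ℓ) (i + r)
  rw [← Int.sum_Ioc_consecutive _ (by omega : i - ℓ - r ≤ i) (by omega : i ≤ i + r + ℓ),
    ← cumIn_add_cumIn c (by omega : i - ℓ ≤ i) (by omega : i ≤ i + r)] at hcons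
  rw [flux]
  linarith

theorem flux_le_cumIn (hf : Conserves q n f) (hn : n = ℓ + r + 1) (c : ℤ → Fin q) (i : ℤ) :
    flux f ℓ r c i ≤ cumIn c i (i + r) := by
  have : 0 ≤ ∑ j ∈ Ioc i (i + r + ℓ), ruleAt f ℓ ((Set.Ioc (i - ℓ) (i + r)).indicator c) j :=
    sum_nonneg fun _ _ => Int.natCast_nonneg _
  rw [hf.flux_eq_sub hn]
  linarith

theorem flux_sub_flux_sub_one (hf : Conserves q n f) (hn : n = ℓ + r + 1) (c : ℤ → Fin q)
    (i : ℤ) : flux f ℓ r c i - flux f ℓ r c (i - 1) = ruleAt f ℓ c i - (c i : ℕ) := by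
  -- Conservation on the union `Ioc (i - 1 - ℓ) (i + r)` of the windows of `i - 1` and `i`: left
  -- of `i` the rule only sees the window of `i - 1`, right of `i` only that of `i`.
  set z := (Set.Ioc (i - 1 - ℓ) (i + r)).indicator c
  have hcons := hf.sum_ruleAt_indicator hn c (i - 1 - ℓ) (i + r)
  have hleft : ∀ j ∈ Ioc (i - 1 - ℓ - r) (i - 1),
      ruleAt f ℓ z j = ruleAt f ℓ ((Set.Ioc (i - 1 - ℓ) (i - 1 + r)).indicator c) j := by
    intro j hj
    rw [mem_Ioc] at hj
    refine ruleAt_congr hn fun t h1 h2 => ?_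
    simp only [z, Set.indicator_apply, Set.mem_Ioc]
    split_ifs <;> first | rfl | omega
  have hright : ∀ j ∈ Ioc i (i + r + ℓ),
      ruleAt f ℓ z j = ruleAt f ℓ ((Set.Ioc (i - ℓ) (i + r)).indicator c) j := by
    intro j hj
    rw [mem_Ioc] at hj
    refine ruleAt_congr hn fun t h1 h2 => ?_
    simp only [z, Set.indicator_apply, Set.mem_Ioc]
    split_ifs <;> first | rfl | omega
  have hmid : ruleAt f ℓ z i = ruleAt f ℓ c i :=
    ruleAt_congr hn fun t h1 h2 => Set.indicator_of_mem (by simp; omega) _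
  rw [← Int.sum_Ioc_consecutive _ (by omega : i - 1 - ℓ - r ≤ i) (by omega : i ≤ i + r + ℓ),
    ← Int.sum_Ioc_sub_one_add (ruleAt f ℓ z) (by omega : i - 1 - ℓ - r < i),
    ← cumIn_add_cumIn c (by omega : i - 1 - ℓ ≤ i) (by omega : i ≤ i + r),
    ← cumIn_sub_one_add c (by omega : i - 1 - ℓ < i),
    sum_congr rfl hleft, sum_congr rfl hright, hmid] at hcons
  rw [hf.flux_eq_sub hn, flux]
  linarith

theorem cumOut_sub_one_add (hf : Conserves q n f) (hn : n = ℓ + r + 1) (c : ℤ → Fin q)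
    {a m : ℤ} (h : a < m) : cumOut f ℓ r c a (m - 1) + ruleAt f ℓ c m = cumOut f ℓ r c a m := by
  have := hf.flux_sub_flux_sub_one hn c m
  rw [cumOut, cumOut, ← cumIn_sub_one_add c h]
  linarith

theorem monotoneOn_cumOut (hf : Conserves q n f) (hn : n = ℓ + r + 1) (c : ℤ → Fin q) (a : ℤ) :
    MonotoneOn (cumOut f ℓ r c a) (Set.Ici a) :=
  monotoneOn_of_le_add_one Set.ordConnected_Ici fun m _ hm _ => by
    rw [← hf.cumOut_sub_one_add hn c (m := m + 1) (by simp at hm; omega), add_sub_cancel_right]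
    exact le_add_of_nonneg_right (Int.natCast_nonneg _)

theorem cumOut_le_cumIn (hf : Conserves q n f) (hn : n = ℓ + r + 1) (c : ℤ → Fin q) {a m : ℤ}
    (h : a ≤ m) : cumOut f ℓ r c a m ≤ cumIn c a (m + r) := by
  have := hf.flux_le_cumIn hn c m
  rw [cumOut, ← cumIn_add_cumIn c h (by omega : m ≤ m + r)]
  linarith

theorem disp_eq_iff (hf : Conserves q n f) (hn : n = ℓ + r + 1) {c : ℤ → Fin q} {j a δ : ℤ}
    {k : ℕ} (ha : a ≤ j - r - 1) (hk : k < (c j : ℕ)) (hδ : δ ∈ Icc (-(r : ℤ)) ℓ) :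
    disp f ℓ r c j k = δ ↔ cumOut f ℓ r c a (j + δ - 1) < cumIn c a (j - 1) + k + 1 ∧
      cumIn c a (j - 1) + k + 1 ≤ cumOut f ℓ r c a (j + δ) := by
  set b := j - r - 1
  have hout : ∀ m, b ≤ m → cumOut f ℓ r c a m = cumIn c a b + cumOut f ℓ r c b m := fun m hm => by
    rw [cumOut, cumOut, ← cumIn_add_cumIn c ha hm]
    ring
  have hin : cumIn c a (j - 1) = cumIn c a b + cumIn c b (j - 1) :=
    (cumIn_add_cumIn c ha (by omega)).symm
  have hlo : cumOut f ℓ r c b (j + (-r - 1)) < cumIn c b (j - 1) + k + 1 := by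
    have := hf.cumOut_le_cumIn hn c (le_refl b)
    rw [show j + (-r - 1) = b by ring]
    rw [show b + r = j - 1 by ring] at this
    linarith
  have hhi : cumIn c b (j - 1) + k + 1 ≤ cumOut f ℓ r c b (j + ℓ) := by
    have := cumIn_le_cumOut (f := f) (r := r) c (by omega : b ≤ j + ℓ - ℓ)
    rw [add_sub_cancel_right, ← cumIn_sub_one_add c (by omega : b < j)] at this
    linarith
  have hmono : MonotoneOn (fun δ => cumOut f ℓ r c b (j + δ)) (Set.Icc (-r - 1) ℓ) :=
    fun x hx y hy hxy => hf.monotoneOn_cumOut hn c b (Set.mem_Ici.2 (by linarith [hx.1]))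
      (Set.mem_Ici.2 (by linarith [hy.1])) (by linarith)
  rw [mem_Icc] at hδ
  rw [disp, firstReach_eq_iff hmono hlo hhi (mem_Icc.2 hδ), hin, hout _ (by omega),
    hout _ (by omega), show j + (δ - 1) = j + δ - 1 by ring]
  constructor <;> rintro ⟨h1, h2⟩ <;> exact ⟨by linarith, by linarith⟩

/-- Seen from the base point `a`, the particles of cell `j` carry the numbers in
`Ioc (cumIn c a (j - 1)) (cumIn c a j)` and those landing in cell `i` the numbers in
`Ioc (cumOut f ℓ r c a (i - 1)) (cumOut f ℓ r c a i)`; this counts the intersection. -/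
theorem card_filter_disp_eq (hf : Conserves q n f) (hn : n = ℓ + r + 1) (c : ℤ → Fin q) {a i j : ℤ}
    (ha : a ≤ i - ℓ - r - 1) (hj : j ∈ Ioc (i - ℓ - 1) (i + r)) :
    (#{k ∈ range (c j) | disp f ℓ r c j k = i - j} : ℤ) =
      max (cumOut f ℓ r c a (i - 1)) (min (cumOut f ℓ r c a i) (cumIn c a j)) -
        max (cumOut f ℓ r c a (i - 1)) (min (cumOut f ℓ r c a i) (cumIn c a (j - 1))) := by
  rw [mem_Ioc] at hj
  rw [filter_congr fun k hk => hf.disp_eq_iff hn (c := c) (j := j) (a := a) (δ := i - j)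
      (by omega) (mem_range.1 hk) (mem_Icc.2 ⟨by omega, by omega⟩),
    add_sub_cancel, card_filter_range_add_mem_Ioc, cumIn_sub_one_add c (by omega)]

theorem finsum_count_particleAutomaton (hf : Conserves q n f) (hn : n = ℓ + r + 1)
    (c : ℤ → Fin q) (i : ℤ) :
    ∑ᶠ j, (particleAutomaton f ℓ r).count c j i = (f fun t => c (i - ℓ + t) : ℕ) := by
  obtain ⟨a, ha⟩ : ∃ a, a = i - ℓ - r - 1 := ⟨_, rfl⟩
  have hsupp : (Function.support fun j => (particleAutomaton f ℓ r).count c j i) ⊆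
      Ioc (i - ℓ - 1) (i + r) := by
    intro j hj
    have hpos : 0 < #{k ∈ range (c j) | disp f ℓ r c j k = i - j} := by
      rw [← count_particleAutomaton]
      exact Nat.pos_of_ne_zero hj
    obtain ⟨k, hk⟩ := card_pos.1 hpos
    rw [mem_filter] at hk
    have := mem_Icc.1 (disp_mem (f := f) (ℓ := ℓ) (r := r) c j k)
    simp only [coe_Ioc, Set.mem_Ioc]
    omega
  rw [finsum_eq_sum_of_support_subset _ hsupp, ← Nat.cast_inj (R := ℤ), Nat.cast_sum,
    sum_congr rfl fun j hj => by rw [count_particleAutomaton, hf.card_filter_disp_eq hn c ha.le hj],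
    Int.sum_Ioc_sub _ (by omega)]
  have hleft := cumIn_le_cumOut (f := f) (r := r) c (by omega : a ≤ i - 1 - ℓ)
  have hright := hf.cumOut_le_cumIn hn c (by omega : a ≤ i)
  have hstep := hf.cumOut_sub_one_add hn c (by omega : a < i)
  have hnonneg : (0 : ℤ) ≤ ruleAt f ℓ c i := Int.natCast_nonneg _
  rw [show i - 1 - ℓ = i - ℓ - 1 by ring] at hleft
  rw [ruleAt] at hstep hnonneg
  omega

end Conserves

open LocalRule in
/-- Fukś–Pivato particle representation: every conservative CA, given
with offset `ℓ` (hence neighborhood `{−ℓ,…,r}` with `r = n−1−ℓ`), is the global map of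
a conservative particle automaton with neighborhood `{−(ℓ+r),…,ℓ+r}` all of whose
displacements lie in `{−r,…,ℓ}`. -/
theorem particle_representation_of_conservative
    (q n : ℕ) [NeZero q] (hn : 1 ≤ n)
    (f : (Fin n → Fin q) → Fin q) (hf : Conserves q n f)
    (ℓ : ℕ) (hℓ : ℓ ≤ n - 1)
    (F : (ℤ → Fin q) → ℤ → Fin q)
    (hF : ∀ (c : ℤ → Fin q) (i : ℤ),
      F c i = f (fun t => c (i - (ℓ : ℤ) + ((t : ℕ) : ℤ)))) :
    ∃ G : PA q (ℓ + (n - 1 - ℓ)) (ℓ + (n - 1 - ℓ)),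
      G.Conservative ∧
      (∀ (c : ℤ → Fin q) (i : ℤ), G.glob c i = F c i) ∧
      (∀ v u u' k d, G.g v u u' k = some d →
        -(((n - 1 - ℓ : ℕ)) : ℤ) ≤ d ∧ d ≤ (ℓ : ℤ)) := by
  have hnℓ : n = ℓ + (n - 1 - ℓ) + 1 := by omega
  have hlt : ∀ (c : ℤ → Fin q) (i : ℤ), (f fun t => c (i - ℓ + t) : ℕ) ≤ q - 1 :=
    fun c i => Nat.le_sub_one_of_lt (Fin.isLt _)
  refine ⟨particleAutomaton f ℓ (n - 1 - ℓ),
    ⟨fun _ _ _ _ => Option.some_ne_none _, fun c i => ?_⟩, fun c i => ?_, fun v u u' k d hd => ?_⟩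
  · rw [hf.finsum_count_particleAutomaton hnℓ]
    exact hlt c i
  · rw [hF, Fin.ext_iff, PA.glob]
    exact (congrArg _ (hf.finsum_count_particleAutomaton hnℓ c i)).trans (min_eq_right (hlt c i))
  · rw [particleAutomaton, Option.some_inj] at hd
    exact mem_Icc.1 (hd ▸ disp_mem _ 0 k)
end
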